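/- arXiv:2301.08469 — 8 statements merged into one kernel-verified Lean document; each statement's English description precedes it below -/
import Mathlib

section
/- For every computably enumerable transitive relation ≺ on ℕ there exists a computable relation ⊏ on ℕ that is a strict partial order (irreflexive and transitive) such that the space of ideals I(≺) is homeomorphic to the space of ideals I(⊏). -/
/-- An ideal of a (transitive) relation `r` on `S`: a nonempty, downward closed,
directed subset of `S`. -/
def IsIdeal {S : Type*} (r : S → S → Prop) (I : Set S) : Prop :=
  I.Nonempty ∧ (∀ a ∈ I, ∀ b, r b a → b ∈ I) ∧
    ∀ a ∈ I, ∀ b ∈ I, ∃ c ∈ I, r a c ∧ r b c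

/-- The space of ideals of a relation `r`. -/
def IdealSpace {S : Type*} (r : S → S → Prop) : Type _ :=
  {I : Set S // IsIdeal r I}

/-- The topology on the space of ideals, generated by the basic sets
`[a] = {I | a ∈ I}` for `a : S`. -/
instance {S : Type*} (r : S → S → Prop) : TopologicalSpace (IdealSpace r) :=
  TopologicalSpace.generateFrom {U | ∃ a : S, U = {I : IdealSpace r | a ∈ I.1}}

/-- A predicate is recursively enumerable (computably enumerable) if the partial
function `fun a => Part.assert (p a) fun _ => Part.some ()` is partial recursive.
(This is Mathlib's `REPred`, absent from this Mathlib version.) -/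
def REPredOld {α : Type*} [Primcodable α] (p : α → Prop) : Prop :=
  Partrec fun a => Part.assert (p a) fun _ => Part.some ()

/-!
Enumerate `≺` in primitive recursive stages `R s`, increasing in `s` with union `≺`, and put
`(a, t) ⊏ (b, u)` iff `t < u` and `b` is reachable from `a` in at most `u - t` steps of `R u`.
Bounding the length of chains by the difference of stages makes `⊏` transitive while keeping it
decidable, and `⊏` implies `≺` on first coordinates. The projection `(a, t) ↦ a` identifies the
ideals: an ideal of `⊏` contains elements of arbitrarily high stage, so as soon as it contains
some `(b, u)` with `a ≺ b`, it contains `(a, t)` for every `t`.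
-/

open Relation

namespace IdealSpace

variable {S T : Type*} {r : S → S → Prop} {r' : T → T → Prop}

theorem isOpen_setOf_mem (a : S) : IsOpen {I : IdealSpace r | a ∈ I.1} :=
  TopologicalSpace.isOpen_generateFrom_of_mem ⟨a, rfl⟩

theorem continuous_iff {X : Type*} [TopologicalSpace X] {f : X → IdealSpace r} :
    Continuous f ↔ ∀ a, IsOpen {x | a ∈ (f x).1} := by
  refine continuous_generateFrom_iff.trans ⟨fun h a => h _ ⟨a, rfl⟩, ?_⟩
  rintro h _ ⟨a, rfl⟩
  exact h a

def homeomorphOfSurjective (f : T → S) (hf : f.Surjective)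
    (hpre : ∀ I, IsIdeal r I → IsIdeal r' (f ⁻¹' I))
    (himage : ∀ J, IsIdeal r' J → IsIdeal r (f '' J))
    (hsat : ∀ J, IsIdeal r' J → f ⁻¹' (f '' J) = J) :
    IdealSpace r ≃ₜ IdealSpace r' where
  toFun I := ⟨f ⁻¹' I.1, hpre I.1 I.2⟩
  invFun J := ⟨f '' J.1, himage J.1 J.2⟩
  left_inv I := Subtype.ext (Set.image_preimage_eq I.1 hf)
  right_inv J := Subtype.ext (hsat J.1 J.2)
  continuous_toFun := continuous_iff.2 fun q => isOpen_setOf_mem (f q)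
  continuous_invFun := continuous_iff.2 fun a => by
    have : {J : IdealSpace r' | a ∈ f '' J.1} = ⋃ q ∈ f ⁻¹' {a}, {J | q ∈ J.1} := by
      ext J
      simp [and_comm]
    exact this ▸ isOpen_biUnion fun q _ => isOpen_setOf_mem q

def homeomorphOfEquiv (e : T ≃ S) : IdealSpace r ≃ₜ IdealSpace (fun x y => r (e x) (e y)) :=
  homeomorphOfSurjective e e.surjective
    (fun _ ⟨⟨a, ha⟩, hlow, hdir⟩ => ⟨⟨e.symm a, by simpa⟩, fun x hx y hy => hlow _ hx _ hy,
      fun x hx y hy => by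
        obtain ⟨c, hc, hxc, hyc⟩ := hdir _ hx _ hy
        exact ⟨e.symm c, by simpa, by simpa, by simpa⟩⟩)
    (fun _ ⟨hne, hlow, hdir⟩ => ⟨hne.image e, by
        rintro _ ⟨x, hx, rfl⟩ b hb
        exact ⟨e.symm b, hlow _ hx _ (by simpa), by simp⟩, by
        rintro _ ⟨x, hx, rfl⟩ _ ⟨y, hy, rfl⟩
        obtain ⟨z, hz, hxz, hyz⟩ := hdir _ hx _ hy
        exact ⟨e z, Set.mem_image_of_mem e hz, hxz, hyz⟩⟩)
    (fun J _ => e.injective.preimage_image J)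

end IdealSpace

def BoundedTransGen {α : Type*} (r : α → α → Prop) : ℕ → α → α → Prop
  | 0, _, _ => False
  | n + 1, a, b => r a b ∨ ∃ x, BoundedTransGen r n a x ∧ r x b

namespace BoundedTransGen

variable {α : Type*} {r s : α → α → Prop} {n m : ℕ} {a b x : α}

theorem single (h : r a b) : BoundedTransGen r (n + 1) a b := Or.inl h

theorem tail (h : BoundedTransGen r n a x) (hx : r x b) : BoundedTransGen r (n + 1) a b :=
  Or.inr ⟨x, h, hx⟩

theorem succ (h : BoundedTransGen r n a b) : BoundedTransGen r (n + 1) a b := by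
  induction n generalizing b with
  | zero => exact h.elim
  | succ n ih =>
    rcases h with h | ⟨x, hx, hxb⟩
    · exact single h
    · exact tail (ih hx) hxb

theorem of_le (h : BoundedTransGen r n a b) (hnm : n ≤ m) : BoundedTransGen r m a b := by
  induction hnm with
  | refl => exact h
  | step _ ih => exact ih.succ

theorem mono (hrs : r ≤ s) (h : BoundedTransGen r n a b) : BoundedTransGen s n a b := by
  induction n generalizing b with
  | zero => exact h.elim
  | succ n ih =>
    rcases h with h | ⟨x, hx, hxb⟩
    · exact single (hrs _ _ h)
    · exact tail (ih hx) (hrs _ _ hxb)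

theorem trans (h₁ : BoundedTransGen r n a x) (h₂ : BoundedTransGen r m x b) :
    BoundedTransGen r (n + m) a b := by
  induction m generalizing b with
  | zero => exact h₂.elim
  | succ m ih =>
    rcases h₂ with h₂ | ⟨y, hy, hyb⟩
    · exact tail (h₁.of_le (Nat.le_add_right n m)) h₂
    · exact tail (ih hy) hyb

theorem transGen (h : BoundedTransGen r n a b) : TransGen r a b := by
  induction n generalizing b with
  | zero => exact h.elim
  | succ n ih =>
    rcases h with h | ⟨x, hx, hxb⟩
    · exact .single h
    · exact (ih hx).tail hxb

end BoundedTransGen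

theorem primrecRel_boundedTransGen {R : ℕ → ℕ → ℕ → Prop}
    (hR : PrimrecPred fun q : ℕ × ℕ × ℕ => R q.1 q.2.1 q.2.2)
    (hbound : ∀ s a b, R s a b → b < s) :
    PrimrecRel fun (sn : ℕ × ℕ) (ab : ℕ × ℕ) => BoundedTransGen (R sn.1) sn.2 ab.1 ab.2 := by
  classical
  -- `hbound` confines everything reachable at stage `s` to `range s`, so the `n`-step
  -- reachable sets can be computed by iterating `step`.
  let reach (sa : ℕ × ℕ) (n : ℕ) : List ℕ :=
    (List.range sa.1).filter (BoundedTransGen (R sa.1) n sa.2 ·)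
  let step (sa : ℕ × ℕ) (L : List ℕ) : List ℕ :=
    (List.range sa.1).filter fun b => R sa.1 sa.2 b ∨ ∃ x ∈ L, R sa.1 x b
  have mem_reach {sa n b} : b ∈ reach sa n ↔ BoundedTransGen (R sa.1) n sa.2 b := by
    refine ⟨fun h => by simpa using (List.mem_filter.1 h).2, fun h => ?_⟩
    refine List.mem_filter.2 ⟨List.mem_range.2 ?_, decide_eq_true h⟩
    cases n with
    | zero => exact h.elim
    | succ n => rcases h with h | ⟨x, -, h⟩ <;> exact hbound _ _ _ h
  have reach_succ (sa : ℕ × ℕ) (n : ℕ) : reach sa (n + 1) = step sa (reach sa n) :=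
    List.filter_congr fun b _ => decide_eq_decide.2 <| by simp only [mem_reach]; rfl
  have hstep : Primrec₂ step := by
    have hlast : PrimrecRel fun (x : ℕ) (sb : ℕ × ℕ) => R sb.1 x sb.2 :=
      hR.comp (Primrec.pair (Primrec.fst.comp Primrec.snd)
        (Primrec.pair Primrec.fst (Primrec.snd.comp Primrec.snd)))
    have hfirst : PrimrecRel fun (b : ℕ) (p : (ℕ × ℕ) × List ℕ) => R p.1.1 p.1.2 b :=
      hR.comp (Primrec.pair (Primrec.fst.comp (Primrec.fst.comp Primrec.snd))
        (Primrec.pair (Primrec.snd.comp (Primrec.fst.comp Primrec.snd)) Primrec.fst))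
    have hcond : PrimrecRel fun (b : ℕ) (p : (ℕ × ℕ) × List ℕ) =>
        R p.1.1 p.1.2 b ∨ ∃ x ∈ p.2, R p.1.1 x b :=
      hfirst.or ((PrimrecRel.exists_mem_list hlast).comp (Primrec.snd.comp Primrec.snd)
        (Primrec.pair (Primrec.fst.comp (Primrec.fst.comp Primrec.snd)) Primrec.fst))
    exact hcond.listFilter.comp (Primrec.list_range.comp (Primrec.fst.comp Primrec.fst)) Primrec.id
  have hreach : Primrec₂ reach := by
    refine (Primrec.nat_rec (Primrec.const [])
      (hstep.comp₂ Primrec₂.left (Primrec.snd.comp₂ Primrec₂.right))).of_eq fun sa n => ?_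
    induction n with
    | zero => exact (List.filter_eq_nil_iff.2 fun _ _ h => (of_decide_eq_true h).elim).symm
    | succ n ih => rw [reach_succ, ← ih]
  refine ((PrimrecRel.exists_mem_list Primrec.eq).comp
    (hreach.comp (Primrec.pair (Primrec.fst.comp Primrec.fst) (Primrec.fst.comp Primrec.snd))
      (Primrec.snd.comp Primrec.fst)) (Primrec.snd.comp Primrec.snd)).of_eq fun _ => ?_
  simp only [exists_eq_right]
  exact mem_reach

def stagedOrder {α : Type*} (R : ℕ → α → α → Prop) (p q : α × ℕ) : Prop :=
  p.2 < q.2 ∧ BoundedTransGen (R q.2) (q.2 - p.2) p.1 q.1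

namespace stagedOrder

variable {α : Type*} {R : ℕ → α → α → Prop} {prec : α → α → Prop} {p q r : α × ℕ}
  {J : Set (α × ℕ)}

theorem irrefl : ¬stagedOrder R p p := fun h => lt_irrefl _ h.1

theorem trans (hmono : Monotone R) (hpq : stagedOrder R p q) (hqr : stagedOrder R q r) :
    stagedOrder R p r := by
  obtain ⟨hlt₁, hpq⟩ := hpq
  obtain ⟨hlt₂, hqr⟩ := hqr
  refine ⟨hlt₁.trans hlt₂, ?_⟩
  have := (hpq.mono (hmono hlt₂.le)).trans hqr
  rwa [show q.2 - p.2 + (r.2 - q.2) = r.2 - p.2 by omega] at this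

theorem of_rel {a b : α} {t u : ℕ} (h : R u a b) (htu : t < u) : stagedOrder R (a, t) (b, u) :=
  ⟨htu, (BoundedTransGen.single (n := 0) h).of_le (by omega)⟩

theorem prec_fst [IsTrans α prec] (hR : ∀ a b, prec a b ↔ ∃ s, R s a b)
    (h : stagedOrder R p q) : prec p.1 q.1 := by
  rw [← transGen_eq_self (r := prec)]
  exact TransGen.mono (fun a b hab => (hR a b).2 ⟨_, hab⟩) _ _ h.2.transGen

theorem isIdeal_preimage_fst [IsTrans α prec] (hmono : Monotone R)
    (hR : ∀ a b, prec a b ↔ ∃ s, R s a b) {I : Set α} (hI : IsIdeal prec I) :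
    IsIdeal (stagedOrder R) (Prod.fst ⁻¹' I) := by
  obtain ⟨⟨a, ha⟩, hlow, hdir⟩ := hI
  refine ⟨⟨(a, 0), ha⟩, fun p hp q hqp => hlow _ hp _ (prec_fst hR hqp), fun p hp q hq => ?_⟩
  obtain ⟨e, he, hpe, hqe⟩ := hdir _ hp _ hq
  obtain ⟨s₁, hs₁⟩ := (hR _ _).1 hpe
  obtain ⟨s₂, hs₂⟩ := (hR _ _).1 hqe
  let u := max (max s₁ s₂) (max p.2 q.2) + 1
  exact ⟨(e, u), he, of_rel (hmono (show s₁ ≤ u by omega) _ _ hs₁) (by omega),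
    of_rel (hmono (show s₂ ≤ u by omega) _ _ hs₂) (by omega)⟩

theorem exists_mem_stage_gt (hmono : Monotone R) (hJ : IsIdeal (stagedOrder R) J)
    (hp : p ∈ J) (n : ℕ) : ∃ q ∈ J, stagedOrder R p q ∧ n < q.2 := by
  induction n with
  | zero =>
    obtain ⟨q, hq, hpq, -⟩ := hJ.2.2 _ hp _ hp
    exact ⟨q, hq, hpq, Nat.zero_lt_of_lt hpq.1⟩
  | succ n ih =>
    obtain ⟨q, hq, hpq, hn⟩ := ih
    obtain ⟨r, hr, hqr, -⟩ := hJ.2.2 _ hq _ hq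
    exact ⟨r, hr, hpq.trans hmono hqr, by have := hqr.1; omega⟩

theorem mk_mem_of_prec [IsTrans α prec] (hmono : Monotone R)
    (hR : ∀ a b, prec a b ↔ ∃ s, R s a b) (hJ : IsIdeal (stagedOrder R) J)
    (hq : q ∈ J) {b : α} (hb : prec b q.1) (t : ℕ) : (b, t) ∈ J := by
  obtain ⟨q', hq', hqq', htq'⟩ := exists_mem_stage_gt hmono hJ hq t
  obtain ⟨k, hk⟩ := (hR _ _).1 (_root_.trans hb (prec_fst hR hqq'))
  obtain ⟨r, hr, hq'r, hkr⟩ := exists_mem_stage_gt hmono hJ hq' k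
  have hbr : BoundedTransGen (R r.2) (1 + (r.2 - q'.2)) b r.1 :=
    (BoundedTransGen.single (n := 0) (hmono hkr.le _ _ hk)).trans hq'r.2
  have hq'r_lt := hq'r.1
  exact hJ.2.1 _ hr _ ⟨by omega, hbr.of_le (by omega)⟩

theorem isIdeal_image_fst [IsTrans α prec] (hmono : Monotone R)
    (hR : ∀ a b, prec a b ↔ ∃ s, R s a b) (hJ : IsIdeal (stagedOrder R) J) :
    IsIdeal prec (Prod.fst '' J) := by
  refine ⟨hJ.1.image _, ?_, ?_⟩
  · rintro _ ⟨q, hq, rfl⟩ b hb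
    exact ⟨(b, 0), mk_mem_of_prec hmono hR hJ hq hb 0, rfl⟩
  · rintro _ ⟨p, hp, rfl⟩ _ ⟨q, hq, rfl⟩
    obtain ⟨r, hr, hpr, hqr⟩ := hJ.2.2 _ hp _ hq
    exact ⟨r.1, ⟨r, hr, rfl⟩, prec_fst hR hpr, prec_fst hR hqr⟩

theorem preimage_image_fst [IsTrans α prec] (hmono : Monotone R)
    (hR : ∀ a b, prec a b ↔ ∃ s, R s a b) (hJ : IsIdeal (stagedOrder R) J) :
    Prod.fst ⁻¹' (Prod.fst '' J) = J := by
  refine subset_antisymm ?_ (Set.subset_preimage_image _ _)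
  rintro ⟨a, t⟩ ⟨p, hp, rfl⟩
  obtain ⟨q, hq, hpq, -⟩ := hJ.2.2 _ hp _ hp
  exact mk_mem_of_prec hmono hR hJ hq (prec_fst hR hpq) t

def idealSpaceHomeomorph [IsTrans α prec] (hmono : Monotone R)
    (hR : ∀ a b, prec a b ↔ ∃ s, R s a b) : IdealSpace prec ≃ₜ IdealSpace (stagedOrder R) :=
  IdealSpace.homeomorphOfSurjective Prod.fst Prod.fst_surjective
    (fun _ => isIdeal_preimage_fst hmono hR) (fun _ => isIdeal_image_fst hmono hR)
    (fun _ => preimage_image_fst hmono hR)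

end stagedOrder

theorem primrecRel_stagedOrder {R : ℕ → ℕ → ℕ → Prop}
    (hR : PrimrecPred fun q : ℕ × ℕ × ℕ => R q.1 q.2.1 q.2.2)
    (hbound : ∀ s a b, R s a b → b < s) : PrimrecRel (stagedOrder R) := by
  have hstage : Primrec fun z : (ℕ × ℕ) × (ℕ × ℕ) => z.2.2 := Primrec.snd.comp Primrec.snd
  have hstart : Primrec fun z : (ℕ × ℕ) × (ℕ × ℕ) => z.1.2 := Primrec.snd.comp Primrec.fst
  exact (Primrec.nat_lt.comp hstart hstage).and
    ((primrecRel_boundedTransGen hR hbound).comp (hstage.pair (Primrec.nat_sub.comp hstage hstart))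
      ((Primrec.fst.comp Primrec.fst).pair (Primrec.fst.comp Primrec.snd)))

open Nat.Partrec Code Encodable in
theorem REPred.exists_primrec_stages {α : Type*} [Primcodable α] {p : α → Prop}
    (hp : REPred p) : ∃ R : ℕ → α → Prop, PrimrecRel R ∧ Monotone R ∧
      (∀ s a, R s a → encode a < s) ∧ ∀ a, p a ↔ ∃ s, R s a := by
  obtain ⟨c, hc⟩ := exists_code.1 hp
  have hdom (a : α) : p a ↔ ∃ x, x ∈ eval c (encode a) := by
    simp [hc, encodek]
  refine ⟨fun s a => (evaln s c (encode a)).isSome, ?_, ?_, ?_, ?_⟩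
  · exact Primrec.eq.comp (Primrec.option_isSome.comp (primrec_evaln.comp
      ((Primrec.fst.pair (Primrec.const c)).pair (Primrec.encode.comp Primrec.snd))))
      (Primrec.const true)
  · intro s t hst a h
    obtain ⟨x, hx⟩ := Option.isSome_iff_exists.1 h
    exact Option.isSome_iff_exists.2 ⟨x, evaln_mono hst hx⟩
  · intro s a h
    obtain ⟨x, hx⟩ := Option.isSome_iff_exists.1 h
    exact evaln_bound hx
  · intro a
    simp only [hdom, evaln_complete, Option.isSome_iff_exists]
    exact exists_comm

theorem stmt0 (prec : ℕ → ℕ → Prop)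
    (hce : REPredOld fun p : ℕ × ℕ => prec p.1 p.2)
    (htrans : Transitive prec) :
    ∃ sq : ℕ → ℕ → Prop,
      ComputablePred (fun p : ℕ × ℕ => sq p.1 p.2) ∧
      Irreflexive sq ∧ Transitive sq ∧
      Nonempty (IdealSpace prec ≃ₜ IdealSpace sq) := by
  have : IsTrans ℕ prec := ⟨fun _ _ _ => @htrans _ _ _⟩
  obtain ⟨R, hRprim, hRmono, hRbound, hR⟩ := REPred.exists_primrec_stages hce
  let S : ℕ → ℕ → ℕ → Prop := fun s a b => R s (a, b)
  have hSmono : Monotone S := fun s t hst a b => hRmono hst (a, b)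
  have hSbound (s a b : ℕ) (h : S s a b) : b < s :=
    (Nat.right_le_pair a b).trans_lt (by simpa using hRbound s (a, b) h)
  refine ⟨fun p q => stagedOrder S p.unpair q.unpair, ?_, fun _ => stagedOrder.irrefl,
    fun _ _ _ => stagedOrder.trans hSmono, ⟨?_⟩⟩
  · exact ((primrecRel_stagedOrder (R := S) hRprim hSbound).comp (Primrec.unpair.comp Primrec.fst)
      (Primrec.unpair.comp Primrec.snd)).computablePred
  · exact (stagedOrder.idealSpaceHomeomorph hSmono fun a b => hR (a, b)).trans
      (IdealSpace.homeomorphOfEquiv Nat.pairEquiv.symm)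
end

section
/- Let ≺ be a computably enumerable transitive relation on ℕ and let U ⊆ ℕ × ℕ be a computably enumerable set, and for each i ∈ ℕ let A_i = {I ∈ I(≺) | ∀ x, (i, x) ∈ U → x ∉ I}. Then there exists a computably enumerable transitive relation ⊏ on ℕ such that I(⊏) is homeomorphic to the topological space whose underlying set is I(≺) and whose topology is generated by the open sets of I(≺) together with all the sets A_i for i ∈ ℕ. -/
/-- A predicate is recursively enumerable (computably enumerable) if the partial
function `fun a => Part.assert (p a) fun _ => Part.some ()` is partial recursive.
(This is Mathlib's `REPred`, absent from this Mathlib version.) -/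
def REPred' {α : Type*} [Primcodable α] (p : α → Prop) : Prop :=
  Partrec fun a => Part.assert (p a) fun _ => Part.some ()

/-!
Refining the topology by the sets `A_i` amounts to letting a point of the new relation also
carry finitely many promises "the ideal avoids `U_i`". A condition `(a, n, s)` consists of a
point `a`, a bound `n` and a stage `s`; it promises that the ideal avoids every `U_i`, `i < n`,
none of whose elements enumerated by stage `s` lies below `a` in the stage-`s` approximation of
`≺`. Since that approximation is the transitive closure of a finite relation, this test is
decidable, so the refinement relation between conditions is computable and transitive. Its
ideals correspond to those of `≺` via `J ↦ ↓{a | (a, n, s) ∈ J}`: the basic set of a condition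
becomes `[a]` intersected with finitely many `A_i`, and `A_i` becomes the union of the basic
sets of the conditions whose promises include `i`.
-/

open Relation Filter

section TransGenDecidable

variable (r : ℕ → ℕ → Prop) [DecidableRel r] (n : ℕ)

def closureStep (L : List ℕ) : List ℕ :=
  (List.range n).filter fun y => ∃ x ∈ L, x = y ∨ r x y

def closureList (a : ℕ) : ℕ → List ℕ :=
  fun k => (closureStep r n)^[k] ((List.range n).filter (r a))

theorem closureList_succ (a k : ℕ) :
    closureList r n a (k + 1) = closureStep r n (closureList r n a k) :=
  Function.iterate_succ_apply' _ _ _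

variable {r n} (hr : ∀ x y, r x y → y < n)
include hr

theorem mem_closureList_zero {a y : ℕ} : y ∈ closureList r n a 0 ↔ r a y := by
  simpa [closureList] using fun h => hr _ _ h

theorem lt_of_mem_closureList {a k y : ℕ} (hy : y ∈ closureList r n a k) : y < n := by
  cases k with
  | zero => exact hr _ _ ((mem_closureList_zero hr).1 hy)
  | succ k =>
    rw [closureList_succ, closureStep, List.mem_filter, List.mem_range] at hy
    exact hy.1

theorem mem_closureList_succ {a k y : ℕ} :
    y ∈ closureList r n a (k + 1) ↔ ∃ x ∈ closureList r n a k, x = y ∨ r x y := by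
  simp only [closureList_succ, closureStep, List.mem_filter, List.mem_range, decide_eq_true_eq,
    and_iff_right_iff_imp]
  rintro ⟨x, hx, rfl | hxy⟩
  · exact lt_of_mem_closureList hr hx
  · exact hr _ _ hxy

theorem closureList_mono {a k l : ℕ} (hkl : k ≤ l) {y : ℕ} (hy : y ∈ closureList r n a k) :
    y ∈ closureList r n a l :=
  monotone_nat_of_le_succ (f := fun k => {y | y ∈ closureList r n a k})
    (fun _ _ hy => (mem_closureList_succ hr).2 ⟨_, hy, .inl rfl⟩) hkl hy

theorem transGen_of_mem_closureList {a y : ℕ} :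
    ∀ {k}, y ∈ closureList r n a k → TransGen r a y
  | 0, hy => .single ((mem_closureList_zero hr).1 hy)
  | k + 1, hy => by
    obtain ⟨x, hx, rfl | hxy⟩ := (mem_closureList_succ hr).1 hy
    · exact transGen_of_mem_closureList hx
    · exact (transGen_of_mem_closureList hx).tail hxy

theorem exists_mem_closureList_of_transGen {a y : ℕ} (h : TransGen r a y) :
    ∃ k, y ∈ closureList r n a k := by
  induction h with
  | single hay => exact ⟨0, (mem_closureList_zero hr).2 hay⟩
  | tail _ hxy ih =>
    obtain ⟨k, hk⟩ := ih
    exact ⟨k + 1, (mem_closureList_succ hr).2 ⟨_, hk, .inr hxy⟩⟩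

theorem closureList_succ_subset_of_subset {a k l : ℕ}
    (h : ∀ y, y ∈ closureList r n a k → y ∈ closureList r n a l) (y : ℕ)
    (hy : y ∈ closureList r n a (k + 1)) : y ∈ closureList r n a (l + 1) := by
  obtain ⟨x, hx, hxy⟩ := (mem_closureList_succ hr).1 hy
  exact (mem_closureList_succ hr).2 ⟨x, h x hx, hxy⟩

/-- The lists grow inside `range n`, so by pigeonhole on their sizes two of the first `n + 2`
coincide, and the iteration is stationary from there on. -/
theorem exists_closureList_stationary (a : ℕ) :
    ∃ k₀ ≤ n, ∀ y, y ∈ closureList r n a (k₀ + 1) → y ∈ closureList r n a k₀ := by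
  classical
  set F : ℕ → Finset ℕ := fun k => (Finset.range n).filter (· ∈ closureList r n a k)
  have hF : ∀ k y, y ∈ F k ↔ y ∈ closureList r n a k := fun k y => by
    simpa [F] using fun hy => lt_of_mem_closureList hr hy
  have hmono : Monotone F := fun k l hkl y => by
    simpa only [hF] using closureList_mono hr hkl
  obtain ⟨k, hk, l, hl, hne, hcard⟩ :=
    Finset.exists_ne_map_eq_of_card_lt_of_maps_to (s := Finset.range (n + 2))
      (t := Finset.range (n + 1)) (f := fun k => (F k).card) (by simp) fun k _ => by
        simpa [Nat.lt_succ_iff] using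
          (Finset.card_le_card (Finset.filter_subset _ _)).trans (Finset.card_range n).le
  wlog hkl : k < l generalizing k l
  · exact this l hl k hk hne.symm hcard.symm (by omega)
  have hFkl : F k = F l := Finset.eq_of_subset_of_card_le (hmono hkl.le) hcard.ge
  refine ⟨k, by simp at hl; omega, fun y hy => ?_⟩
  rw [← hF, hFkl]
  exact hmono (Nat.succ_le_of_lt hkl) ((hF _ _).2 hy)

theorem mem_closureList_iff {a y : ℕ} : y ∈ closureList r n a n ↔ TransGen r a y := by
  refine ⟨transGen_of_mem_closureList hr, fun h => ?_⟩
  obtain ⟨k, hk⟩ := exists_mem_closureList_of_transGen hr h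
  obtain ⟨k₀, hk₀n, hstat⟩ := exists_closureList_stationary hr a
  have hstable : ∀ j, ∀ y, y ∈ closureList r n a (k₀ + j) → y ∈ closureList r n a k₀ := by
    intro j
    induction j with
    | zero => exact fun _ => id
    | succ j ih => exact fun y hy => hstat y (closureList_succ_subset_of_subset hr ih y hy)
  rcases le_total k k₀ with hkk | hkk
  · exact closureList_mono hr (hkk.trans hk₀n) hk
  · obtain ⟨j, rfl⟩ := Nat.exists_eq_add_of_le hkk
    exact closureList_mono hr hk₀n (hstable j y hk)

end TransGenDecidable

theorem PrimrecPred.transGen {r : ℕ → ℕ → ℕ → Prop}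
    (hr : PrimrecPred fun q : ℕ × ℕ × ℕ => r q.1 q.2.1 q.2.2) (hlt : ∀ n x y, r n x y → y < n) :
    PrimrecPred fun q : ℕ × ℕ × ℕ => TransGen (r q.1) q.2.1 q.2.2 := by
  classical
  have hedge : PrimrecRel fun (x : ℕ) (p : ℕ × ℕ × List ℕ) => x = p.1 ∨ r p.2.1 x p.1 :=
    .or (Primrec.eq.comp .fst (Primrec.fst.comp .snd))
      (hr.comp ((Primrec.fst.comp (Primrec.snd.comp .snd)).pair
        (Primrec.fst.pair (Primrec.fst.comp .snd))))
  have hnext : PrimrecRel fun (y : ℕ) (p : ℕ × List ℕ) => ∃ x ∈ p.2, x = y ∨ r p.1 x y :=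
    hedge.exists_mem_list.comp (Primrec.snd.comp .snd)
      (Primrec.fst.pair ((Primrec.fst.comp .snd).pair (Primrec.snd.comp .snd)))
  have hstep : Primrec₂ fun (q : ℕ × ℕ × ℕ) (L : List ℕ) => closureStep (r q.1) q.1 L :=
    (hnext.listFilter.comp (Primrec.list_range.comp (Primrec.fst.comp .fst))
      ((Primrec.fst.comp .fst).pair .snd)).to₂
  have hsucc : PrimrecRel fun (y : ℕ) (q : ℕ × ℕ × ℕ) => r q.1 q.2.1 y :=
    hr.comp ((Primrec.fst.comp .snd).pair ((Primrec.fst.comp (Primrec.snd.comp .snd)).pair .fst))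
  have hbase : Primrec fun q : ℕ × ℕ × ℕ => (List.range q.1).filter (r q.1 q.2.1) :=
    hsucc.listFilter.comp (Primrec.list_range.comp .fst) .id
  have hmem := (PrimrecRel.exists_mem_list Primrec.eq).comp
    (Primrec.nat_iterate Primrec.fst hbase hstep) (Primrec.snd.comp .snd)
  exact hmem.of_eq fun q => by
    rw [← mem_closureList_iff (hlt q.1)]
    simp [closureList]

theorem PrimrecPred.imp {α : Type*} [Primcodable α] {p q : α → Prop} (hp : PrimrecPred p)
    (hq : PrimrecPred q) : PrimrecPred fun a => p a → q a :=
  (hp.not.or hq).of_eq fun _ => imp_iff_not_or.symm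

structure StagedEnum (R : ℕ → ℕ → Prop) where
  approx : ℕ → ℕ → ℕ → Prop
  primrecPred : PrimrecPred fun q : ℕ × ℕ × ℕ => approx q.1 q.2.1 q.2.2
  mono {s t x y : ℕ} : s ≤ t → approx s x y → approx t x y
  lt {t x y : ℕ} : approx t x y → y < t
  rel_iff_exists (x y : ℕ) : R x y ↔ ∃ t, approx t x y

open Nat.Partrec in
theorem REPred.nonempty_stagedEnum {R : ℕ → ℕ → Prop}
    (h : REPred fun p : ℕ × ℕ => R p.1 p.2) : Nonempty (StagedEnum R) := by
  obtain ⟨c, hc⟩ := Code.exists_code.1 h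
  refine ⟨{
    approx := fun t x y => (Code.evaln t c (Nat.pair x y)).isSome
    primrecPred := Primrec.primrecPred <| .of_eq (Primrec.option_isSome.comp <|
      Code.primrec_evaln.comp <| (Primrec.fst.pair (.const c)).pair
        (Primrec₂.natPair.comp (Primrec.fst.comp .snd) (Primrec.snd.comp .snd))) (by simp)
    mono := fun hst h => ?_
    lt := fun h => ?_
    rel_iff_exists := fun x y => ?_ }⟩
  · obtain ⟨z, hz⟩ := Option.isSome_iff_exists.1 h
    exact Option.isSome_iff_exists.2 ⟨z, Code.evaln_mono hst hz⟩
  · obtain ⟨z, hz⟩ := Option.isSome_iff_exists.1 h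
    exact (Nat.right_le_pair _ _).trans_lt (Code.evaln_bound hz)
  · have hdom : R x y ↔ (Code.eval c (Nat.pair x y)).Dom := by
      rw [hc, show Nat.pair x y = Encodable.encode (x, y) from rfl]
      simp [Part.assert]
    simp only [hdom, Part.dom_iff_mem, Code.evaln_complete, Option.isSome_iff_exists]
    exact ⟨fun ⟨z, t, hz⟩ => ⟨t, z, hz⟩, fun ⟨t, z, hz⟩ => ⟨z, t, hz⟩⟩

namespace StagedEnum

variable {R : ℕ → ℕ → Prop} (E : StagedEnum R)

theorem eventually_approx {x y : ℕ} (h : R x y) : ∀ᶠ t in atTop, E.approx t x y := by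
  obtain ⟨s, hs⟩ := (E.rel_iff_exists x y).1 h
  exact eventually_atTop.2 ⟨s, fun t hst => E.mono hst hs⟩

def reach (t : ℕ) : ℕ → ℕ → Prop := TransGen (E.approx t)

theorem reach_mono {s t x y : ℕ} (hst : s ≤ t) (h : E.reach s x y) : E.reach t x y :=
  TransGen.mono (fun _ _ => E.mono hst) _ _ h

theorem eventually_reach {x y : ℕ} (h : R x y) : ∀ᶠ t in atTop, E.reach t x y :=
  (E.eventually_approx h).mono fun _ => .single

theorem rel_of_reach [IsTrans ℕ R] {t x y : ℕ} (h : E.reach t x y) : R x y := by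
  rw [← transGen_eq_self (r := R)]
  exact TransGen.mono (fun a b hab => (E.rel_iff_exists a b).2 ⟨t, hab⟩) _ _ h

end StagedEnum

section IdealSpace

variable {S : Type*} {r : S → S → Prop}

theorem IdealSpace.isOpen_setOf_mem_s4 (a : S) : IsOpen {I : IdealSpace r | a ∈ I.1} :=
  TopologicalSpace.isOpen_generateFrom_of_mem ⟨a, rfl⟩

theorem IdealSpace.continuous_iff_s4 {X : Type*} [TopologicalSpace X] {f : X → IdealSpace r} :
    Continuous f ↔ ∀ a, IsOpen {x | a ∈ (f x).1} := by
  refine continuous_generateFrom_iff.trans ⟨fun h a => h _ ⟨a, rfl⟩, ?_⟩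
  rintro h _ ⟨a, rfl⟩
  exact h a

theorem isIdeal_preimage_iff {T : Type*} (e : T ≃ S) {I : Set S} :
    IsIdeal (fun x y => r (e x) (e y)) (e ⁻¹' I) ↔ IsIdeal r I := by
  simp only [IsIdeal, Set.Nonempty, e.surjective.forall, e.surjective.exists, Set.mem_preimage]

def IdealSpace.congr {T : Type*} (e : T ≃ S) (r : S → S → Prop) :
    IdealSpace (fun x y => r (e x) (e y)) ≃ₜ IdealSpace r where
  toFun K := ⟨e.symm ⁻¹' K.1,
    (isIdeal_preimage_iff e).1 (by rw [e.preimage_symm_preimage]; exact K.2)⟩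
  invFun I := ⟨e ⁻¹' I.1, (isIdeal_preimage_iff e).2 I.2⟩
  left_inv K := Subtype.ext (e.preimage_symm_preimage K.1)
  right_inv I := Subtype.ext (e.symm_preimage_preimage I.1)
  continuous_toFun := IdealSpace.continuous_iff_s4.2 fun b => IdealSpace.isOpen_setOf_mem_s4 (e.symm b)
  continuous_invFun := IdealSpace.continuous_iff_s4.2 fun a => IdealSpace.isOpen_setOf_mem_s4 (e a)

end IdealSpace

namespace IdealRefinement

def Avoids (U : Set (ℕ × ℕ)) (I : Set ℕ) (i : ℕ) : Prop := ∀ x, (i, x) ∈ U → x ∉ I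

def lowerOf (r : ℕ → ℕ → Prop) (J : Set (ℕ × ℕ × ℕ)) : Set ℕ := {x | ∃ c ∈ J, r x c.1}

variable {prec : ℕ → ℕ → Prop} (P : StagedEnum prec) {U : Set (ℕ × ℕ)}
  (V : StagedEnum fun i x => (i, x) ∈ U)

def Clear (t i b : ℕ) : Prop := ∀ x, V.approx t i x → ¬ ReflTransGen (P.approx t) x b

/-- For a condition `c = (a, n, s)`, `c.1` is the point, `c.2.1` the number of promises and
`c.2.2` the stage. -/
def Refines (c d : ℕ × ℕ × ℕ) : Prop :=
  c.2.2 < d.2.2 ∧ c.2.1 < d.2.1 ∧ P.reach d.2.2 c.1 d.1 ∧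
    ∀ i < c.2.1, Clear P V c.2.2 i c.1 → Clear P V d.2.2 i d.1

def condsOf (I : Set ℕ) : Set (ℕ × ℕ × ℕ) :=
  {c | c.1 ∈ I ∧ ∀ i < c.2.1, Clear P V c.2.2 i c.1 → Avoids U I i}

instance : IsTrans (ℕ × ℕ × ℕ) (Refines P V) where
  trans _ _ _ := fun ⟨hs, hn, hr, hc⟩ ⟨hs', hn', hr', hc'⟩ =>
    ⟨hs.trans hs', hn.trans hn', (P.reach_mono hs'.le hr).trans hr',
      fun i hi h => hc' i (hi.trans hn) (hc i hi h)⟩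

theorem primrecPred_clear : PrimrecPred fun q : ℕ × ℕ × ℕ => Clear P V q.1 q.2.1 q.2.2 := by
  have hreach : PrimrecPred fun q : ℕ × ℕ × ℕ => ReflTransGen (P.approx q.1) q.2.1 q.2.2 :=
    (Primrec.eq.comp (Primrec.snd.comp .snd) (Primrec.fst.comp .snd) |>.or
      (PrimrecPred.transGen P.primrecPred fun _ _ _ => P.lt)).of_eq
      fun _ => reflTransGen_iff_eq_or_transGen.symm
  have hstep : PrimrecRel fun (x : ℕ) (q : ℕ × ℕ × ℕ) =>
      V.approx q.1 q.2.1 x → ¬ ReflTransGen (P.approx q.1) x q.2.2 :=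
    (V.primrecPred.comp ((Primrec.fst.comp .snd).pair
      ((Primrec.fst.comp (Primrec.snd.comp .snd)).pair .fst))).imp
    (hreach.comp ((Primrec.fst.comp .snd).pair
      (Primrec.fst.pair (Primrec.snd.comp (Primrec.snd.comp .snd))))).not
  refine (hstep.forall_mem_list.comp (Primrec.list_range.comp .fst) .id).of_eq fun q => ?_
  simp only [List.mem_range]
  exact ⟨fun h x hx => h x (V.lt hx) hx, fun h x _ => h x⟩

theorem primrecRel_refines : PrimrecRel (Refines P V) := by
  have hclear := primrecPred_clear P V
  have hstep : PrimrecRel fun (i : ℕ) (p : (ℕ × ℕ × ℕ) × (ℕ × ℕ × ℕ)) =>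
      Clear P V p.1.2.2 i p.1.1 → Clear P V p.2.2.2 i p.2.1 :=
    (hclear.comp ((Primrec.snd.comp (Primrec.snd.comp (Primrec.fst.comp .snd))).pair
      (Primrec.fst.pair (Primrec.fst.comp (Primrec.fst.comp .snd))))).imp
    (hclear.comp ((Primrec.snd.comp (Primrec.snd.comp (Primrec.snd.comp .snd))).pair
      (Primrec.fst.pair (Primrec.fst.comp (Primrec.snd.comp .snd)))))
  have hreach : PrimrecPred fun p : (ℕ × ℕ × ℕ) × (ℕ × ℕ × ℕ) => P.reach p.2.2.2 p.1.1 p.2.1 :=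
    (PrimrecPred.transGen P.primrecPred fun _ _ _ => P.lt).comp
      ((Primrec.snd.comp (Primrec.snd.comp .snd)).pair
        ((Primrec.fst.comp .fst).pair (Primrec.fst.comp .snd)))
  refine (Primrec.nat_lt.comp (Primrec.snd.comp (Primrec.snd.comp .fst))
    (Primrec.snd.comp (Primrec.snd.comp .snd)) |>.and <|
    Primrec.nat_lt.comp (Primrec.fst.comp (Primrec.snd.comp .fst))
    (Primrec.fst.comp (Primrec.snd.comp .snd)) |>.and <| hreach.and <|
    hstep.forall_mem_list.comp
      (Primrec.list_range.comp (Primrec.fst.comp (Primrec.snd.comp .fst))) .id).of_eq fun p => ?_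
  simp only [List.mem_range]
  rfl

variable {P V}

theorem Clear.of_reach {t i b b' : ℕ} (h : Clear P V t i b') (hbb' : P.reach t b b') :
    Clear P V t i b :=
  fun x hx hxb => h x hx (hxb.trans hbb'.to_reflTransGen)

theorem clear_of_avoids [IsTrans ℕ prec] {I : Set ℕ} (hI : IsIdeal prec I) {i b : ℕ}
    (hb : b ∈ I) (h : Avoids U I i) (t : ℕ) : Clear P V t i b := by
  intro x hx hxb
  refine h x ((V.rel_iff_exists i x).2 ⟨t, hx⟩) ?_
  rcases reflTransGen_iff_eq_or_transGen.1 hxb with rfl | hxb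
  · exact hb
  · exact hI.2.1 b hb x (P.rel_of_reach hxb)

section IdealOfRefines

variable {J : Set (ℕ × ℕ × ℕ)} (hJ : IsIdeal (Refines P V) J)
include hJ

theorem exists_refines_le {c : ℕ × ℕ × ℕ} (hc : c ∈ J) (N : ℕ) :
    ∃ d ∈ J, Refines P V c d ∧ N ≤ d.2.2 ∧ N ≤ d.2.1 := by
  induction N with
  | zero =>
    obtain ⟨d, hd, hcd, -⟩ := hJ.2.2 c hc c hc
    exact ⟨d, hd, hcd, Nat.zero_le _, Nat.zero_le _⟩
  | succ N ih =>
    obtain ⟨d, hd, hcd, hsd, hnd⟩ := ih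
    obtain ⟨e, he, hde, -⟩ := hJ.2.2 d hd d hd
    exact ⟨e, he, _root_.trans hcd hde, by have := hde.1; omega, by have := hde.2.1; omega⟩

theorem exists_refines_eventually {c d : ℕ × ℕ × ℕ} (hc : c ∈ J) (hd : d ∈ J) {Q : ℕ → Prop}
    (hQ : ∀ᶠ t in atTop, Q t) (N : ℕ) :
    ∃ f ∈ J, Refines P V c f ∧ Refines P V d f ∧ Q f.2.2 ∧ N ≤ f.2.1 := by
  obtain ⟨M, hM⟩ := eventually_atTop.1 hQ
  obtain ⟨e, he, hce, hde⟩ := hJ.2.2 c hc d hd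
  obtain ⟨f, hf, hef, hMf, hNf⟩ := exists_refines_le hJ he (max M N)
  exact ⟨f, hf, _root_.trans hce hef, _root_.trans hde hef, hM _ (le_of_max_le_left hMf),
    le_of_max_le_right hNf⟩

/-- Clearness is inherited along `Refines`, so the promise of `c` is kept by every condition of
`J` above it. -/
theorem avoids_of_clear {c : ℕ × ℕ × ℕ} (hc : c ∈ J) {i : ℕ} (hi : i < c.2.1)
    (hclear : Clear P V c.2.2 i c.1) : Avoids U (lowerOf prec J) i := by
  rintro x hxU ⟨d, hd, hxd⟩
  obtain ⟨f, -, hcf, hdf, ⟨hxf, hxdf⟩, -⟩ := exists_refines_eventually hJ hc hd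
    ((V.eventually_approx hxU).and (P.eventually_reach hxd)) 0
  exact hcf.2.2.2 i hi hclear x hxf (hxdf.trans hdf.2.2.1).to_reflTransGen

variable [IsTrans ℕ prec]

theorem fst_mem_lowerOf {c : ℕ × ℕ × ℕ} (hc : c ∈ J) : c.1 ∈ lowerOf prec J := by
  obtain ⟨d, hd, hcd, -⟩ := hJ.2.2 c hc c hc
  exact ⟨d, hd, P.rel_of_reach hcd.2.2.1⟩

theorem isIdeal_lowerOf : IsIdeal prec (lowerOf prec J) := by
  refine ⟨?_, fun x ⟨c, hc, hxc⟩ y hyx => ⟨c, hc, _root_.trans hyx hxc⟩, ?_⟩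
  · obtain ⟨c, hc⟩ := hJ.1
    exact ⟨c.1, fst_mem_lowerOf hJ hc⟩
  · rintro x ⟨c, hc, hxc⟩ y ⟨d, hd, hyd⟩
    obtain ⟨f, hf, hcf, hdf⟩ := hJ.2.2 c hc d hd
    exact ⟨f.1, fst_mem_lowerOf hJ hf, _root_.trans hxc (P.rel_of_reach hcf.2.2.1),
      _root_.trans hyd (P.rel_of_reach hdf.2.2.1)⟩

theorem exists_clear_of_avoids {i : ℕ} (h : Avoids U (lowerOf prec J) i) :
    ∃ c ∈ J, i < c.2.1 ∧ Clear P V c.2.2 i c.1 := by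
  obtain ⟨c₀, hc₀⟩ := hJ.1
  obtain ⟨c, hc, -, -, hic⟩ := exists_refines_le hJ hc₀ (i + 1)
  exact ⟨c, hc, hic, clear_of_avoids (isIdeal_lowerOf hJ) (fst_mem_lowerOf hJ hc) h _⟩

theorem condsOf_lowerOf : condsOf P V (lowerOf prec J) = J := by
  refine Set.Subset.antisymm (fun c ⟨⟨d, hd, hcd⟩, hc⟩ => ?_)
    fun c hc => ⟨fst_mem_lowerOf hJ hc, fun i hi hi' => avoids_of_clear hJ hc hi hi'⟩
  obtain ⟨f, hf, hdf, -, ⟨hcf, hreach⟩, hnf⟩ := exists_refines_eventually hJ hd hd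
    ((eventually_gt_atTop c.2.2).and (P.eventually_reach hcd)) (c.2.1 + 1)
  refine hJ.2.1 f hf c ⟨hcf, by omega, hreach.trans hdf.2.2.1, fun i hi hi' => ?_⟩
  exact clear_of_avoids (isIdeal_lowerOf hJ) (fst_mem_lowerOf hJ hf) (hc i hi hi') _

end IdealOfRefines

section IdealOfPrec

variable {I : Set ℕ} (hI : IsIdeal prec I)
include hI

theorem lowerOf_condsOf : lowerOf prec (condsOf P V I) = I := by
  refine Set.Subset.antisymm (fun x ⟨c, hc, hxc⟩ => hI.2.1 _ hc.1 _ hxc) fun x hx => ?_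
  obtain ⟨b, hb, hxb, -⟩ := hI.2.2 x hx x hx
  exact ⟨(b, 0, 0), ⟨hb, fun i hi => absurd hi (Nat.not_lt_zero i)⟩, hxb⟩

variable [IsTrans ℕ prec]

theorem exists_eventually_not_clear {a : ℕ} (ha : a ∈ I) (k : ℕ) :
    ∃ b ∈ I, prec a b ∧ ∀ᶠ t in atTop, ∀ i < k, ¬ Avoids U I i → ¬ Clear P V t i b := by
  induction k with
  | zero =>
    obtain ⟨b, hb, hab, -⟩ := hI.2.2 a ha a ha
    exact ⟨b, hb, hab, .of_forall fun _ i hi => absurd hi (Nat.not_lt_zero i)⟩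
  | succ k ih =>
    obtain ⟨b, hb, hab, hblock⟩ := ih
    by_cases hk : Avoids U I k
    · refine ⟨b, hb, hab, hblock.mono fun t ht i hi hi' => ?_⟩
      rcases Nat.lt_succ_iff_lt_or_eq.1 hi with hi | rfl
      exacts [ht i hi hi', absurd hk hi']
    · obtain ⟨x, hxU, hxI⟩ : ∃ x, (k, x) ∈ U ∧ x ∈ I := by
        simpa [Avoids] using hk
      obtain ⟨b', hb', hbb', hxb'⟩ := hI.2.2 b hb x hxI
      refine ⟨b', hb', _root_.trans hab hbb', ?_⟩
      filter_upwards [hblock, P.eventually_reach hbb', V.eventually_approx hxU,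
        P.eventually_reach hxb'] with t ht hbb't hx hxb't i hi hi' hclear
      rcases Nat.lt_succ_iff_lt_or_eq.1 hi with hi | rfl
      exacts [ht i hi hi' (hclear.of_reach hbb't), hclear x hx hxb't.to_reflTransGen]

theorem isIdeal_condsOf : IsIdeal (Refines P V) (condsOf P V I) := by
  refine ⟨?_, ?_, ?_⟩
  · obtain ⟨a, ha⟩ := hI.1
    exact ⟨(a, 0, 0), ha, fun i hi => absurd hi (Nat.not_lt_zero i)⟩
  · rintro d ⟨hdI, hd⟩ c ⟨-, hn, hreach, hclear⟩
    exact ⟨hI.2.1 _ hdI _ (P.rel_of_reach hreach),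
      fun i hi hi' => hd i (hi.trans hn) (hclear i hi hi')⟩
  · rintro c₁ ⟨hc₁I, hc₁⟩ c₂ ⟨hc₂I, hc₂⟩
    obtain ⟨a, ha, hca₁, hca₂⟩ := hI.2.2 _ hc₁I _ hc₂I
    set k := max c₁.2.1 c₂.2.1 + 1
    obtain ⟨b, hb, hab, hblock⟩ := exists_eventually_not_clear hI ha k
    obtain ⟨u, hu₁, hu₂, hr₁, hr₂, hu⟩ := ((eventually_gt_atTop c₁.2.2).and <|
      (eventually_gt_atTop c₂.2.2).and <| (P.eventually_reach (_root_.trans hca₁ hab)).and <|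
        (P.eventually_reach (_root_.trans hca₂ hab)).and hblock).exists
    have hrefines : ∀ c ∈ condsOf P V I, c.2.2 < u → c.2.1 < k → P.reach u c.1 b →
        Refines P V c (b, k, u) := fun c hc hcu hck hcb =>
      ⟨hcu, hck, hcb, fun i hi hi' => clear_of_avoids hI hb (hc.2 i hi hi') u⟩
    refine ⟨(b, k, u), ⟨hb, fun i hi hi' => not_not.1 fun h => hu i hi h hi'⟩,
      hrefines c₁ ⟨hc₁I, hc₁⟩ hu₁ (by omega) hr₁, hrefines c₂ ⟨hc₂I, hc₂⟩ hu₂ (by omega) hr₂⟩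

end IdealOfPrec

variable (P V) [IsTrans ℕ prec]

def idealEquiv : IdealSpace (Refines P V) ≃ IdealSpace prec where
  toFun J := ⟨lowerOf prec J.1, isIdeal_lowerOf J.2⟩
  invFun I := ⟨condsOf P V I.1, isIdeal_condsOf I.2⟩
  left_inv J := Subtype.ext (condsOf_lowerOf J.2)
  right_inv I := Subtype.ext (lowerOf_condsOf I.2)

variable (U) in
abbrev refinedTopology (prec : ℕ → ℕ → Prop) : TopologicalSpace (IdealSpace prec) :=
  TopologicalSpace.generateFrom ({s | IsOpen s} ∪ {s | ∃ i, s = {I | Avoids U I.1 i}})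

theorem continuous_idealEquiv :
    @Continuous _ _ _ (refinedTopology U prec) (idealEquiv P V) := by
  have hmem : ∀ a, IsOpen {J : IdealSpace (Refines P V) | a ∈ lowerOf prec J.1} := fun a => by
    have : {J : IdealSpace (Refines P V) | a ∈ lowerOf prec J.1} =
        ⋃ c ∈ {c : ℕ × ℕ × ℕ | prec a c.1}, {J | c ∈ J.1} := by
      ext J
      simp [lowerOf, and_comm]
    rw [this]
    exact isOpen_biUnion fun c _ => IdealSpace.isOpen_setOf_mem_s4 c
  refine continuous_generateFrom_iff.2 ?_
  rintro s (hs | ⟨i, rfl⟩)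
  · exact (IdealSpace.continuous_iff_s4.2 hmem).isOpen_preimage s hs
  · have : idealEquiv P V ⁻¹' {I | Avoids U I.1 i} =
        ⋃ c ∈ {c : ℕ × ℕ × ℕ | i < c.2.1 ∧ Clear P V c.2.2 i c.1}, {J | c ∈ J.1} := by
      ext J
      simp only [Set.mem_preimage, Set.mem_ofPred_eq, Set.mem_iUnion]
      refine ⟨fun h => ?_, fun ⟨c, ⟨hi, hc⟩, hcJ⟩ => avoids_of_clear J.2 hcJ hi hc⟩
      obtain ⟨c, hcJ, hi, hc⟩ := exists_clear_of_avoids J.2 h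
      exact ⟨c, ⟨hi, hc⟩, hcJ⟩
    rw [this]
    exact isOpen_biUnion fun c _ => IdealSpace.isOpen_setOf_mem_s4 c

theorem continuous_idealEquiv_symm :
    @Continuous _ _ (refinedTopology U prec) _ (idealEquiv P V).symm := by
  let := refinedTopology U prec
  refine IdealSpace.continuous_iff_s4.2 fun c => ?_
  have : {I : IdealSpace prec | c ∈ condsOf P V I.1} = {I | c.1 ∈ I.1} ∩
      ⋂ i ∈ {i | i < c.2.1 ∧ Clear P V c.2.2 i c.1}, {I | Avoids U I.1 i} := by
    ext I
    simp [condsOf, and_imp]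
  refine this ▸ (TopologicalSpace.isOpen_generateFrom_of_mem
    (Or.inl (IdealSpace.isOpen_setOf_mem_s4 c.1))).inter ?_
  exact ((Set.finite_lt_nat c.2.1).subset fun i hi => hi.1).isOpen_biInter fun i _ =>
    TopologicalSpace.isOpen_generateFrom_of_mem (Or.inr ⟨i, rfl⟩)

def idealHomeomorph : @Homeomorph (IdealSpace (Refines P V)) (IdealSpace prec) _
    (refinedTopology U prec) :=
  @Homeomorph.mk _ _ _ (refinedTopology U prec) (idealEquiv P V)
    (continuous_idealEquiv P V) (continuous_idealEquiv_symm P V)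

end IdealRefinement

open IdealRefinement in
theorem stmt4 (prec : ℕ → ℕ → Prop)
    (hce : REPred' fun p : ℕ × ℕ => prec p.1 p.2)
    (htrans : Transitive prec)
    (U : Set (ℕ × ℕ)) (hU : REPred' (· ∈ U)) :
    ∃ sq : ℕ → ℕ → Prop,
      (REPred' fun p : ℕ × ℕ => sq p.1 p.2) ∧ Transitive sq ∧
      Nonempty (@Homeomorph (IdealSpace sq) (IdealSpace prec) _
        (TopologicalSpace.generateFrom
          ({s : Set (IdealSpace prec) | IsOpen s} ∪
            {s : Set (IdealSpace prec) | ∃ i : ℕ,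
              s = {I : IdealSpace prec | ∀ x, (i, x) ∈ U → x ∉ I.1}}))) := by
  obtain ⟨P⟩ := REPred.nonempty_stagedEnum hce
  obtain ⟨V⟩ := REPred.nonempty_stagedEnum (R := fun i x => (i, x) ∈ U) hU
  have : IsTrans ℕ prec := ⟨fun _ _ _ => @htrans _ _ _⟩
  let e := (Denumerable.eqv (ℕ × ℕ × ℕ)).symm
  refine ⟨fun m k => Refines P V (e m) (e k), ?_, fun _ _ _ => _root_.trans, ⟨?_⟩⟩
  · exact ((primrecRel_refines P V).comp ((Primrec.ofNat _).comp .fst)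
      ((Primrec.ofNat _).comp .snd)).computablePred.to_re
  · exact @Homeomorph.trans _ _ _ _ _ (refinedTopology U prec)
      (IdealSpace.congr e (Refines P V)) (idealHomeomorph P V)
end

section
/- There is a computable function t : ℕ → ℕ such that for every n: the relation V_{t(n)} is transitive; if V_n is transitive then V_{t(n)} = V_n; and for all m, n, if V_m = V_n (as relations) then V_{t(m)} = V_{t(n)}. -/
/-- The `e`-th c.e. binary relation on `ℕ`: `i V_e j` iff `Nat.pair i j` lies in the
domain of the `e`-th partial computable function. -/
def V (e : ℕ) : ℕ → ℕ → Prop := fun i j =>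
  ((Denumerable.ofNat Nat.Partrec.Code e).eval (Nat.pair i j)).Dom

/-!
Take `t n` to be an index of the transitive closure of `V n`. This closure is again c.e.,
uniformly in `n`: `TransGen (V n) i j` holds iff some finite chain `i = x₀ V_n x₁ … V_n xₖ = j`
exists, and since `V n` is the union of the increasing decidable relations "halts within `s`
steps", such a chain is already a chain of one of them; so it suffices to search over pairs of a
list and a step bound. The s-m-n theorem turns the uniform enumeration into a computable `t`, and
all three properties follow from `V (t n) = TransGen (V n)`.
-/

open Encodable Denumerable Relation
open Nat.Partrec (Code)
open Nat.Partrec.Code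

namespace List

variable {α : Type*}

theorem isChain_iff_forall_lt_getI [Inhabited α] {R : α → α → Prop} {l : List α} :
    IsChain R l ↔ ∀ i < l.length - 1, R (l.getI i) (l.getI (i + 1)) := by
  rw [isChain_iff_getElem]
  refine forall_congr' fun i => ⟨fun h hi => ?_, fun h hi => ?_⟩
  · rw [getI_eq_getElem _ (by omega), getI_eq_getElem _ (by omega)]
    exact h (by omega)
  · simpa only [getI_eq_getElem _ hi, getI_eq_getElem _ (Nat.lt_of_succ_lt hi)] using h (by omega)

theorem isChain_exists_iff_of_monotone {R : ℕ → α → α → Prop} (hR : Monotone R) {l : List α} :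
    IsChain (fun a b => ∃ s, R s a b) l ↔ ∃ s, IsChain (R s) l := by
  refine ⟨fun h => ?_, fun ⟨s, h⟩ => h.imp fun a b hab => ⟨s, hab⟩⟩
  induction h with
  | nil => exact ⟨0, .nil⟩
  | singleton a => exact ⟨0, .singleton a⟩
  | cons_cons hab _ ih =>
    obtain ⟨s, hs⟩ := hab
    obtain ⟨t, ht⟩ := ih
    exact ⟨max s t, .cons_cons (hR (le_max_left s t) _ _ hs)
      (ht.imp fun a b => hR (le_max_right s t) a b)⟩

end List

theorem Relation.transGen_iff_exists_isChain {α : Type*} {r : α → α → Prop} {a b : α} :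
    TransGen r a b ↔ ∃ l, List.IsChain r (a :: l ++ [b]) := by
  refine ⟨fun h => ?_, ?_⟩
  · induction h using TransGen.head_induction_on with
    | single hab => exact ⟨[], .cons_cons hab (.singleton b)⟩
    | head hac _ ih =>
      obtain ⟨l, hl⟩ := ih
      exact ⟨_ :: l, .cons_cons hac hl⟩
  · rintro ⟨l, hl⟩
    induction l generalizing a with
    | nil => exact .single (List.isChain_pair.1 hl)
    | cons c l ih =>
      simp only [List.cons_append, List.isChain_cons_cons] at hl
      exact .head hl.1 (ih hl.2)

section Computability

variable {α : Type*} [Primcodable α]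

theorem PrimrecPred.isChain {R : α → ℕ → ℕ → Prop}
    (hR : PrimrecPred fun p : α × ℕ × ℕ => R p.1 p.2.1 p.2.2) {f : α → List ℕ} (hf : Primrec f) :
    PrimrecPred fun a => List.IsChain (R a) (f a) := by
  have hstep : PrimrecRel fun i a => R a ((f a).getI i) ((f a).getI (i + 1)) :=
    hR.comp <| Primrec.snd.pair <|
      (Primrec.list_getI.comp (hf.comp Primrec.snd) Primrec.fst).pair
        (Primrec.list_getI.comp (hf.comp Primrec.snd) (Primrec.succ.comp Primrec.fst))
  refine (hstep.forall_mem_list.comp (Primrec.list_range.comp <| Primrec.nat_sub.comp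
    (Primrec.list_length.comp hf) (Primrec.const 1)) Primrec.id).of_eq fun a => ?_
  simp only [List.mem_range, List.isChain_iff_forall_lt_getI, id]

theorem ComputablePred.rePred_exists {β : Type*} [Denumerable β] {p : α → β → Prop}
    (hp : ComputablePred fun x : α × β => p x.1 x.2) : REPred fun a => ∃ b, p a b := by
  obtain ⟨f, hf, hpf⟩ := ComputablePred.computable_iff.1 hp
  have hpf (a : α) (b : β) : p a b ↔ f (a, b) = true := Iff.of_eq (congrFun hpf (a, b))
  have hsearch : Partrec fun a => Nat.rfind fun k => Part.some (f (a, ofNat β k)) :=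
    Partrec.rfind <| Computable₂.partrec₂ <|
      hf.comp (Computable.fst.pair ((Computable.ofNat β).comp Computable.snd))
  refine hsearch.dom_re.of_eq fun a =>
    Nat.rfind_dom.trans ⟨fun ⟨k, hk, _⟩ => ?_, fun ⟨b, hb⟩ => ?_⟩
  · exact ⟨ofNat β k, (hpf _ _).2 (Part.mem_some_iff.1 hk).symm⟩
  · refine ⟨encode b, Part.mem_some_iff.2 ?_, fun _ => trivial⟩
    rw [ofNat_encode, (hpf a b).1 hb]

theorem REPred.exists_code {p : α → Prop} (hp : REPred p) :
    ∃ c : Code, ∀ a, p a ↔ (c.eval (encode a)).Dom := by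
  obtain ⟨c, hc⟩ := Code.exists_code.1 hp
  exact ⟨c, fun a => by simpa [hc, encodek] using ⟨fun h => ⟨h, trivial⟩, fun ⟨h, _⟩ => h⟩⟩

theorem REPred.comp {β : Type*} [Primcodable β] {p : β → Prop} (hp : REPred p) {f : α → β}
    (hf : Computable f) : REPred fun a => p (f a) :=
  Partrec.comp hp hf

theorem REPred.transGen {r : α → ℕ → ℕ → Prop}
    (hr : REPred fun p : α × ℕ × ℕ => r p.1 p.2.1 p.2.2) :
    REPred fun p : α × ℕ × ℕ => TransGen (r p.1) p.2.1 p.2.2 := by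
  obtain ⟨c, hc⟩ := hr.exists_code
  let approx (s : ℕ) (a : α) (u v : ℕ) : Prop := (evaln s c (encode (a, u, v))).isSome
  have hr_iff (a : α) (u v : ℕ) : r a u v ↔ ∃ s, approx s a u v := by
    simp only [approx, hc (a, u, v), Part.dom_iff_mem, evaln_complete, Option.isSome_iff_exists,
      Option.mem_def]
    exact exists_comm
  have hmono (a : α) : Monotone fun s => approx s a := fun s t hst u v h => by
    obtain ⟨x, hx⟩ := Option.isSome_iff_exists.1 h
    exact Option.isSome_iff_exists.2 ⟨x, evaln_mono hst hx⟩
  have happrox : PrimrecPred fun q : ((α × ℕ × ℕ) × List ℕ × ℕ) × ℕ × ℕ =>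
      approx q.1.2.2 q.1.1.1 q.2.1 q.2.2 :=
    Primrec.primrecPred <| (Primrec.option_isSome.comp <| primrec_evaln.comp <|
      ((Primrec.snd.comp (Primrec.snd.comp Primrec.fst)).pair (Primrec.const c)).pair
        (Primrec.encode.comp ((Primrec.fst.comp (Primrec.fst.comp Primrec.fst)).pair
          Primrec.snd))).of_eq fun _ => Bool.decide_eq_true.symm
  have hchain : PrimrecPred fun q : (α × ℕ × ℕ) × List ℕ × ℕ =>
      List.IsChain (approx q.2.2 q.1.1) (q.1.2.1 :: q.2.1 ++ [q.1.2.2]) :=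
    happrox.isChain <| Primrec.list_cons.comp (Primrec.fst.comp (Primrec.snd.comp Primrec.fst))
      (Primrec.list_concat.comp (Primrec.fst.comp Primrec.snd)
        (Primrec.snd.comp (Primrec.snd.comp Primrec.fst)))
  refine (ComputablePred.rePred_exists (p := fun (x : α × ℕ × ℕ) (q : List ℕ × ℕ) =>
    List.IsChain (approx q.2 x.1) (x.2.1 :: q.1 ++ [x.2.2])) hchain.computablePred).of_eq
    fun ⟨a, u, v⟩ => ?_
  simp only [transGen_iff_exists_isChain, funext₂ fun u v => propext (hr_iff a u v),
    List.isChain_exists_iff_of_monotone (hmono a), Prod.exists]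

theorem REPred.exists_computable_index {P : ℕ → ℕ → Prop}
    (hP : REPred fun p : ℕ × ℕ => P p.1 p.2) :
    ∃ t : ℕ → ℕ, Computable t ∧ ∀ n x, ((ofNat Code (t n)).eval x).Dom ↔ P n x := by
  obtain ⟨c, hc⟩ := hP.exists_code
  refine ⟨fun n => encode (c.curry n),
    (Primrec.encode.comp (primrec₂_curry.comp (Primrec.const c) Primrec.id)).to_comp,
    fun n x => ?_⟩
  simpa [eval_curry, encode_prod_val] using (hc (n, x)).symm

end Computability

theorem rePred_V : REPred fun p : ℕ × ℕ × ℕ => V p.1 p.2.1 p.2.2 :=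
  Partrec.dom_re <| eval_part.comp ((Primrec.ofNat Code).comp Primrec.fst).to_comp
    (Primrec₂.natPair.comp (Primrec.fst.comp Primrec.snd) (Primrec.snd.comp Primrec.snd)).to_comp

theorem stmt5 :
    ∃ t : ℕ → ℕ, Computable t ∧
      (∀ n, Transitive (V (t n)) ∧ (Transitive (V n) → V (t n) = V n)) ∧
      (∀ m n, V m = V n → V (t m) = V (t n)) := by
  have hre : REPred fun p : ℕ × ℕ => TransGen (V p.1) p.2.unpair.1 p.2.unpair.2 :=
    rePred_V.transGen.comp (Computable.fst.pair (Computable.unpair.comp Computable.snd))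
  obtain ⟨t, ht, htV⟩ :=
    REPred.exists_computable_index (P := fun n x => TransGen (V n) x.unpair.1 x.unpair.2) hre
  have key : ∀ n, V (t n) = TransGen (V n) := fun n => by
    ext i j
    simpa only [V, Nat.unpair_pair] using htV n (Nat.pair i j)
  refine ⟨t, ht, fun n => ⟨?_, fun h => ?_⟩, fun m n h => by rw [key, key, h]⟩
  · rw [key]
    exact fun _ _ _ => TransGen.trans
  · have : IsTrans ℕ (V n) := ⟨@h⟩
    rw [key, transGen_eq_self]
end

section
/- There is a computable function o : ℕ → ℕ such that for every n: the relation V_{o(n)} is a partial order (reflexive, transitive, and antisymmetric), and if V_n is a partial order then V_{o(n)} = V_n. -/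
/-!
Enumerate `V n` in stages and, at stage `s`, take the transitive closure of the finitely many
pairs enumerated so far. As long as that finite closure is antisymmetric, put its pairs, together
with the diagonal, into `V (o n)`. The closures of the good stages form an increasing chain of
transitive antisymmetric relations, so their union with the diagonal is a partial order. If `V n`
is already a partial order, every closure lies inside `V n`, hence every stage is good and the
union is exactly `V n`. The index `o n` is obtained uniformly from `n` by currying one code.
-/

open Relation

theorem Finset.exists_le_card_succ_subset_of_monotone {β : Type*} {f : ℕ → Finset β}
    (hf : Monotone f) {B : Finset β} (hB : ∀ m, f m ⊆ B) : ∃ m ≤ B.card, f (m + 1) ⊆ f m := by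
  by_contra! h
  have hgrow : ∀ m ≤ B.card + 1, m ≤ (f m).card := by
    intro m hm
    induction m with
    | zero => exact Nat.zero_le _
    | succ m ih =>
      have := Finset.card_lt_card
        ((hf (Nat.le_add_right m 1)).ssubset_of_not_subset (h m (by omega)))
      have := ih (by omega)
      omega
  have := hgrow (B.card + 1) le_rfl
  have := Finset.card_le_card (hB (B.card + 1))
  omega

section TransClosure

variable {α : Type*} [DecidableEq α]

def compStep (X : List (α × α)) : List (α × α) :=
  X ++ X.flatMap fun p => (X.filter fun q => p.2 = q.1).map fun q => (p.1, q.2)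

theorem mem_compStep {X : List (α × α)} {a c : α} :
    (a, c) ∈ compStep X ↔ (a, c) ∈ X ∨ ∃ b, (a, b) ∈ X ∧ (b, c) ∈ X := by
  simp [compStep]

theorem subset_compStep (X : List (α × α)) : X ⊆ compStep X :=
  List.subset_append_left _ _

theorem compStep_mono {X Y : List (α × α)} (h : X ⊆ Y) : compStep X ⊆ compStep Y := by
  rintro ⟨a, c⟩ hac
  rcases mem_compStep.1 hac with hac | ⟨b, hab, hbc⟩
  · exact subset_compStep Y (h hac)
  · exact mem_compStep.2 (Or.inr ⟨b, h hab, h hbc⟩)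

theorem iterate_compStep_mono (X : List (α × α)) {m n : ℕ} (hmn : m ≤ n) :
    compStep^[m] X ⊆ compStep^[n] X := by
  induction hmn with
  | refl => exact List.Subset.refl _
  | step _ ih =>
    rw [Function.iterate_succ_apply']
    exact List.Subset.trans ih (subset_compStep _)

theorem transGen_of_mem_iterate_compStep {X : List (α × α)} {m : ℕ} {a b : α}
    (h : (a, b) ∈ compStep^[m] X) : TransGen (fun a b => (a, b) ∈ X) a b := by
  induction m generalizing a b with
  | zero => exact TransGen.single h
  | succ m ih =>
    rw [Function.iterate_succ_apply'] at h
    rcases mem_compStep.1 h with h | ⟨c, hac, hcb⟩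
    · exact ih h
    · exact (ih hac).trans (ih hcb)

theorem mem_prod_of_mem_iterate_compStep {X : List (α × α)} {m : ℕ} {p : α × α}
    (h : p ∈ compStep^[m] X) : p ∈ (X.map Prod.fst).toFinset ×ˢ (X.map Prod.snd).toFinset := by
  obtain ⟨a, b⟩ := p
  induction m generalizing a b with
  | zero => simpa using ⟨⟨b, h⟩, ⟨a, h⟩⟩
  | succ m ih =>
    rw [Function.iterate_succ_apply'] at h
    rcases mem_compStep.1 h with h | ⟨c, hac, hcb⟩
    · exact ih _ _ h
    · exact Finset.mem_product.2
        ⟨(Finset.mem_product.1 (ih _ _ hac)).1, (Finset.mem_product.1 (ih _ _ hcb)).2⟩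

theorem exists_le_iterate_compStep_succ_subset (X : List (α × α)) :
    ∃ m ≤ X.length * X.length, compStep^[m + 1] X ⊆ compStep^[m] X := by
  obtain ⟨m, hm, hsub⟩ := Finset.exists_le_card_succ_subset_of_monotone
    (f := fun m => (compStep^[m] X).toFinset)
    (fun _ _ hmn _ hp =>
      List.mem_toFinset.2 (iterate_compStep_mono X hmn (List.mem_toFinset.1 hp)))
    (fun _ _ hp => mem_prod_of_mem_iterate_compStep (List.mem_toFinset.1 hp))
  refine ⟨m, hm.trans ?_, fun p hp => List.mem_toFinset.1 (hsub (List.mem_toFinset.2 hp))⟩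
  calc _ = _ := Finset.card_product _ _
    _ ≤ X.length * X.length := Nat.mul_le_mul
        ((List.toFinset_card_le _).trans_eq (List.length_map _))
        ((List.toFinset_card_le _).trans_eq (List.length_map _))

theorem iterate_compStep_subset_of_succ_subset {X : List (α × α)} {m : ℕ}
    (h : compStep^[m + 1] X ⊆ compStep^[m] X) (n : ℕ) : compStep^[n] X ⊆ compStep^[m] X := by
  induction n with
  | zero => exact iterate_compStep_mono X (Nat.zero_le m)
  | succ n ih =>
    rw [Function.iterate_succ_apply']
    exact List.Subset.trans (compStep_mono ih)
      (by rwa [← Function.iterate_succ_apply' compStep])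

/-- The iterates only contain pairs from `(X.map Prod.fst) × (X.map Prod.snd)`, so they stop
growing after at most `X.length * X.length` steps. -/
def transClosure (X : List (α × α)) : List (α × α) := compStep^[X.length * X.length] X

theorem compStep_transClosure_subset (X : List (α × α)) :
    compStep (transClosure X) ⊆ transClosure X := by
  obtain ⟨m, hm, hsub⟩ := exists_le_iterate_compStep_succ_subset X
  rw [transClosure, ← Function.iterate_succ_apply' compStep]
  exact List.Subset.trans (iterate_compStep_subset_of_succ_subset hsub _)
    (iterate_compStep_mono X hm)

theorem mem_transClosure {X : List (α × α)} {a b : α} :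
    (a, b) ∈ transClosure X ↔ TransGen (fun a b => (a, b) ∈ X) a b := by
  refine ⟨transGen_of_mem_iterate_compStep, fun h => ?_⟩
  induction h with
  | single h => exact iterate_compStep_mono X (Nat.zero_le _) h
  | tail _ hbc ih =>
    exact compStep_transClosure_subset X (mem_compStep.2 (Or.inr ⟨_, ih,
      iterate_compStep_mono X (Nat.zero_le _) hbc⟩))

end TransClosure

section Primrec

variable {α : Type*} [Primcodable α]

theorem primrecRel_list_mem : PrimrecRel fun (L : List α) (a : α) => a ∈ L :=
  (PrimrecRel.exists_mem_list Primrec.eq).of_eq fun L a => by simp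

theorem primrecPred_list_antisymm :
    PrimrecPred fun L : List (α × α) => ∀ a b, (a, b) ∈ L → (b, a) ∈ L → a = b := by
  have hR : PrimrecRel fun (p : α × α) (L : List (α × α)) => ¬(p.2, p.1) ∈ L ∨ p.1 = p.2 :=
    (primrecRel_list_mem.comp₂ Primrec₂.right (Primrec₂.pair.comp₂
      (Primrec.snd.comp₂ Primrec₂.left) (Primrec.fst.comp₂ Primrec₂.left))).not.or
      (Primrec.eq.comp₂ (Primrec.fst.comp₂ Primrec₂.left) (Primrec.snd.comp₂ Primrec₂.left))
  exact (hR.forall_mem_list.comp .id .id).of_eq fun L => by simp [imp_iff_not_or]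

variable [DecidableEq α]

open Primrec in
theorem primrec_compStep : Primrec (compStep : List (α × α) → List (α × α)) := by
  have hfilter : Primrec₂ fun (X : List (α × α)) (p : α × α) => X.filter fun q => p.2 = q.1 :=
    (PrimrecRel.listFilter (Primrec.eq.comp₂ (snd.comp₂ Primrec₂.right)
      (fst.comp₂ Primrec₂.left))).comp₂ Primrec₂.left Primrec₂.right
  have hcomp : Primrec₂ fun (X : List (α × α)) (p : α × α) =>
      (X.filter fun q => p.2 = q.1).map fun q => (p.1, q.2) :=
    list_map hfilter (Primrec₂.pair.comp₂ (fst.comp₂ (snd.comp₂ Primrec₂.left))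
      (snd.comp₂ Primrec₂.right))
  exact list_append.comp .id (list_flatMap .id hcomp)

theorem primrec_transClosure : Primrec (transClosure : List (α × α) → List (α × α)) :=
  Primrec.nat_iterate (Primrec.nat_mul.comp Primrec.list_length Primrec.list_length) Primrec.id
    (primrec_compStep.comp₂ Primrec₂.right)

end Primrec

def IsPartialOrderRel {α : Type*} (r : α → α → Prop) : Prop :=
  Reflexive r ∧ Transitive r ∧ ∀ a b, r a b → r b a → a = b

theorem isPartialOrderRel_of_monotone {α : Type*} {T : ℕ → α → α → Prop} {G : ℕ → Prop}
    (hT : Monotone T) (htrans : ∀ s, Transitive (T s))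
    (hanti : ∀ s, G s → ∀ a b, T s a b → T s b a → a = b) :
    IsPartialOrderRel fun a b => a = b ∨ ∃ s, G s ∧ T s a b := by
  have hdir : ∀ {s t}, G s → G t → ∃ u, G u ∧ s ≤ u ∧ t ≤ u := fun {s t} hs ht =>
    (le_total s t).elim (fun h => ⟨t, ht, h, le_rfl⟩) (fun h => ⟨s, hs, le_rfl, h⟩)
  refine ⟨fun a => Or.inl rfl, ?_, ?_⟩
  · rintro a b c (rfl | ⟨s, hs, hab⟩) (rfl | ⟨t, ht, hbc⟩)
    · exact Or.inl rfl
    · exact Or.inr ⟨t, ht, hbc⟩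
    · exact Or.inr ⟨s, hs, hab⟩
    · obtain ⟨u, hu, hsu, htu⟩ := hdir hs ht
      exact Or.inr ⟨u, hu, htrans u (hT hsu a b hab) (hT htu b c hbc)⟩
  · rintro a b (rfl | ⟨s, hs, hab⟩) hba
    · rfl
    rcases hba with hba | ⟨t, ht, hba⟩
    · exact hba.symm
    · obtain ⟨u, hu, hsu, htu⟩ := hdir hs ht
      exact hanti u hu a b (hT hsu a b hab) (hT htu b a hba)

open Nat.Partrec (Code)

def stage (n s : ℕ) : List (ℕ × ℕ) :=
  (List.range s).filterMap fun k => ((Denumerable.ofNat Code n).evaln s k).map fun _ => k.unpair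

theorem mem_stage {n s i j : ℕ} :
    (i, j) ∈ stage n s ↔ ∃ x, x ∈ (Denumerable.ofNat Code n).evaln s (Nat.pair i j) := by
  simp only [stage, List.mem_filterMap, List.mem_range, Option.map_eq_some_iff]
  constructor
  · rintro ⟨k, -, x, hx, hk⟩
    exact ⟨x, by rwa [← Nat.pair_unpair k, hk] at hx⟩
  · rintro ⟨x, hx⟩
    exact ⟨_, Code.evaln_bound hx, x, hx, Nat.unpair_pair i j⟩

theorem stage_mono (n : ℕ) {s t : ℕ} (hst : s ≤ t) : stage n s ⊆ stage n t := by
  rintro ⟨i, j⟩ h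
  obtain ⟨x, hx⟩ := mem_stage.1 h
  exact mem_stage.2 ⟨x, Code.evaln_mono hst hx⟩

theorem V_iff_exists_mem_stage {n i j : ℕ} : V n i j ↔ ∃ s, (i, j) ∈ stage n s := by
  simp only [V, mem_stage, Part.dom_iff_mem, Code.evaln_complete]
  exact ⟨fun ⟨x, s, hx⟩ => ⟨s, x, hx⟩, fun ⟨s, x, hx⟩ => ⟨x, s, hx⟩⟩

open Primrec in
theorem primrec₂_stage : Primrec₂ stage :=
  listFilterMap (list_range.comp snd) (option_map
    (Code.primrec_evaln.comp (Primrec.pair (Primrec.pair (snd.comp fst)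
      ((Primrec.ofNat Code).comp (fst.comp fst))) snd))
    (unpair.comp (snd.comp fst)).to₂)

def stageClosure (n s : ℕ) (i j : ℕ) : Prop := (i, j) ∈ transClosure (stage n s)

def StageAntisymm (n s : ℕ) : Prop := ∀ a b, stageClosure n s a b → stageClosure n s b a → a = b

def repairedOrder (n : ℕ) : ℕ → ℕ → Prop := fun i j =>
  i = j ∨ ∃ s, StageAntisymm n s ∧ stageClosure n s i j

theorem stageClosure_iff {n s i j : ℕ} :
    stageClosure n s i j ↔ TransGen (fun a b => (a, b) ∈ stage n s) i j :=
  mem_transClosure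

theorem monotone_stageClosure (n : ℕ) : Monotone (stageClosure n) := fun _ _ hst _ _ h =>
  stageClosure_iff.2 (TransGen.mono (fun a b => @stage_mono n _ _ hst (a, b)) _ _
    (stageClosure_iff.1 h))

theorem transitive_stageClosure (n s : ℕ) : Transitive (stageClosure n s) := fun _ _ _ hab hbc =>
  stageClosure_iff.2 ((stageClosure_iff.1 hab).trans (stageClosure_iff.1 hbc))

theorem isPartialOrderRel_repairedOrder (n : ℕ) : IsPartialOrderRel (repairedOrder n) :=
  isPartialOrderRel_of_monotone (monotone_stageClosure n) (transitive_stageClosure n)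
    fun _ hs => hs

theorem stageClosure_le_V {n : ℕ} (ht : Transitive (V n)) (s : ℕ) : stageClosure n s ≤ V n := by
  have : IsTrans ℕ (V n) := ⟨fun _ _ _ => @ht _ _ _⟩
  exact fun i j h => transGen_minimal (r := fun a b => (a, b) ∈ stage n s)
    (fun _ _ hab => V_iff_exists_mem_stage.2 ⟨s, hab⟩) i j (stageClosure_iff.1 h)

theorem repairedOrder_eq_V {n : ℕ} (h : IsPartialOrderRel (V n)) : repairedOrder n = V n := by
  obtain ⟨hrefl, htrans, hanti⟩ := h
  ext i j
  constructor
  · rintro (rfl | ⟨s, -, hij⟩)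
    · exact hrefl i
    · exact stageClosure_le_V htrans s i j hij
  · intro hij
    obtain ⟨s, hs⟩ := V_iff_exists_mem_stage.1 hij
    refine Or.inr ⟨s, fun a b hab hba => ?_, stageClosure_iff.2 (TransGen.single hs)⟩
    exact hanti a b (stageClosure_le_V htrans s a b hab) (stageClosure_le_V htrans s b a hba)

open Primrec in
theorem exists_computable_V_iff_exists {P : ℕ → ℕ → ℕ → ℕ → Prop}
    (hP : PrimrecRel fun (x : ℕ × ℕ × ℕ) (s : ℕ) => P x.1 x.2.1 x.2.2 s) :
    ∃ o : ℕ → ℕ, Computable o ∧ ∀ n i j, V (o n) i j ↔ ∃ s, P n i j s := by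
  classical
  have hunpair : Primrec fun x : ℕ => (x.unpair.1, x.unpair.2.unpair) :=
    Primrec.pair (fst.comp unpair) (unpair.comp (snd.comp unpair))
  have hdec : Primrec₂ fun (x s : ℕ) =>
      decide (P x.unpair.1 x.unpair.2.unpair.1 x.unpair.2.unpair.2 s) :=
    hP.decide.comp (hunpair.comp fst) snd
  obtain ⟨c, hc⟩ := Code.exists_code.1 (Partrec.nat_iff.1 (Partrec.rfind hdec.to_comp.partrec₂))
  refine ⟨fun n => Encodable.encode (c.curry n),
    (Primrec.encode.comp (Code.primrec₂_curry.comp (.const c) .id)).to_comp, fun n i j => ?_⟩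
  simp [V, Denumerable.ofNat_encode, Code.eval_curry, hc, Nat.rfind_dom]

open Primrec in
theorem primrecRel_repairedOrder_witness : PrimrecRel fun (x : ℕ × ℕ × ℕ) (s : ℕ) =>
    x.2.1 = x.2.2 ∨ StageAntisymm x.1 s ∧ stageClosure x.1 s x.2.1 x.2.2 := by
  have hL : Primrec₂ fun (x : ℕ × ℕ × ℕ) (s : ℕ) => transClosure (stage x.1 s) :=
    primrec_transClosure.comp₂ (primrec₂_stage.comp₂ (fst.comp₂ Primrec₂.left) Primrec₂.right)
  have hij : Primrec₂ fun (x : ℕ × ℕ × ℕ) (_ : ℕ) => x.2 := snd.comp₂ Primrec₂.left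
  exact (Primrec.eq.comp₂ (fst.comp₂ hij) (snd.comp₂ hij)).or
    ((primrecPred_list_antisymm.comp hL).and (primrecRel_list_mem.comp₂ hL hij))

theorem stmt7 :
    ∃ o : ℕ → ℕ, Computable o ∧
      ∀ n, (Reflexive (V (o n)) ∧ Transitive (V (o n)) ∧
              (∀ a b, V (o n) a b → V (o n) b a → a = b)) ∧
        ((Reflexive (V n) ∧ Transitive (V n) ∧ (∀ a b, V n a b → V n b a → a = b)) →
          V (o n) = V n) := by
  obtain ⟨o, ho, hV⟩ := exists_computable_V_iff_exists
    (P := fun n i j s => i = j ∨ StageAntisymm n s ∧ stageClosure n s i j)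
    primrecRel_repairedOrder_witness
  have hrepair : ∀ n, V (o n) = repairedOrder n := fun n => by
    ext i j
    simp only [hV, repairedOrder, exists_or, exists_const]
  refine ⟨o, ho, fun n => ?_⟩
  rw [hrepair n]
  exact ⟨isPartialOrderRel_repairedOrder n, repairedOrder_eq_V⟩
end

section
/- Let T ⊆ List ℕ be a tree (a set of finite sequences closed under taking prefixes) and let ≺ be the transitive closure of the relation R on S = List ℕ × Bool generated as follows: for every nonempty σ ∈ List ℕ with immediate predecessor σ⁻ (σ with its last entry removed): (σ⁻, false) R (σ, false); (σ⁻, true) R (σ, true); (σ, false) R (σ, true); and additionally (σ⁻, true) R (σ, false) whenever σ ∉ T. If T has an infinite path, i.e. there exists x : ℕ → ℕ with [x 0, …, x (k−1)] ∈ T for every k, then the space of ideals I(≺) is not a T1 space. -/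
/-- The generating relation on `List ℕ × Bool` used in the `Π¹₁`-completeness
construction: `(σ, false)` codes `σ` and `(σ, true)` codes the underlined `σ̲`. -/
def TreeRel (T : Set (List ℕ)) : (List ℕ × Bool) → (List ℕ × Bool) → Prop := fun a b =>
  ∃ σ : List ℕ, σ ≠ [] ∧
    ((a = (σ.dropLast, false) ∧ b = (σ, false)) ∨
     (a = (σ.dropLast, true) ∧ b = (σ, true)) ∨
     (a = (σ, false) ∧ b = (σ, true)) ∨
     (σ ∉ T ∧ a = (σ.dropLast, true) ∧ b = (σ, false)))

/-!
Along an infinite path `x` of `T` no edge `(σ⁻, true) ≺ (σ, false)` is present, so the nodes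
`(σ, false)` with `σ` on the path form an ideal `I`, and adding the underlined nodes `(σ, true)`
gives an ideal `J ⊋ I`. Basic open sets `[a]` are upward closed under inclusion of ideals, so every
neighbourhood of `I` contains `J`: `J` specializes to `I`, which is impossible in a T1 space.
-/

namespace IdealSpace

variable {S : Type*} {r : S → S → Prop}

theorem specializes_of_subset {I J : IdealSpace r} (h : I.1 ⊆ J.1) : J ⤳ I := by
  change nhds J ≤ nhds I
  rw [TopologicalSpace.nhds_generateFrom (a := I)]
  refine le_iInf₂ ?_
  rintro _ ⟨hIs, a, rfl⟩
  exact Filter.le_principal_iff.2 <| IsOpen.mem_nhds (TopologicalSpace.isOpen_generateFrom_of_mem ⟨a, rfl⟩) (h hIs)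

theorem not_t1Space_of_ssubset {I J : IdealSpace r} (h : I.1 ⊂ J.1) :
    ¬ T1Space (IdealSpace r) := fun _ =>
  h.ne (congrArg Subtype.val (specializes_of_subset h.subset).eq).symm

end IdealSpace

theorem Relation.TransGen.mem_of_forall_rel_mem {α : Type*} {r : α → α → Prop} {s : Set α}
    (hs : ∀ ⦃a b⦄, r a b → b ∈ s → a ∈ s) {a b : α} (hab : Relation.TransGen r a b)
    (hb : b ∈ s) : a ∈ s := by
  induction hab with
  | single h => exact hs h hb
  | tail _ h ih => exact ih (hs h hb)

theorem isIdeal_transGen {α : Type*} {r : α → α → Prop} {s : Set α} (hne : s.Nonempty)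
    (hs : ∀ ⦃a b⦄, r a b → b ∈ s → a ∈ s)
    (hdir : ∀ a ∈ s, ∀ b ∈ s, ∃ c ∈ s, Relation.TransGen r a c ∧ Relation.TransGen r b c) :
    IsIdeal (Relation.TransGen r) s :=
  ⟨hne, fun _ ha _ hba => hba.mem_of_forall_rel_mem hs ha, hdir⟩

namespace TreeRel

variable (x : ℕ → ℕ) (T : Set (List ℕ))

def initSeg (k : ℕ) : List ℕ := List.ofFn fun i : Fin k => x i

theorem dropLast_initSeg (k : ℕ) : (initSeg x k).dropLast = initSeg x (k - 1) := by
  cases k with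
  | zero => rfl
  | succ k => rw [initSeg, List.ofFn_succ', List.concat_eq_append, List.dropLast_concat]; rfl

def branch (c : Bool) : Set (List ℕ × Bool) := {p | ∃ k, p.1 = initSeg x k ∧ p.2 ≤ c}

theorem mem_branch_of_rel (hx : ∀ k, initSeg x k ∈ T) {c : Bool} {p q : List ℕ × Bool}
    (hpq : TreeRel T p q) (hq : q ∈ branch x c) : p ∈ branch x c := by
  obtain ⟨k, hk, hqc⟩ := hq
  obtain ⟨σ, -, h | h | h | ⟨hσT, h⟩⟩ := hpq <;> obtain ⟨rfl, rfl⟩ := h <;> dsimp only at hk hqc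
  · exact ⟨k - 1, by rw [hk, dropLast_initSeg], Bool.false_le _⟩
  · exact ⟨k - 1, by rw [hk, dropLast_initSeg], hqc⟩
  · exact ⟨k, hk, Bool.false_le _⟩
  · exact absurd (hk ▸ hx k) hσT

theorem rel_underline {σ : List ℕ} (hσ : σ ≠ []) : TreeRel T (σ, false) (σ, true) :=
  ⟨σ, hσ, .inr <| .inr <| .inl ⟨rfl, rfl⟩⟩

theorem rel_initSeg_succ (k : ℕ) (b : Bool) :
    TreeRel T (initSeg x k, b) (initSeg x (k + 1), b) := by
  refine ⟨initSeg x (k + 1), by simp [initSeg], ?_⟩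
  rw [dropLast_initSeg, Nat.add_sub_cancel]
  cases b
  · exact .inl ⟨rfl, rfl⟩
  · exact .inr <| .inl ⟨rfl, rfl⟩

theorem transGen_initSeg {m n : ℕ} (hmn : m < n) {d c : Bool} (hdc : d ≤ c) :
    Relation.TransGen (TreeRel T) (initSeg x m, d) (initSeg x n, c) := by
  have chain (b : Bool) : Relation.TransGen (TreeRel T) (initSeg x m, b) (initSeg x n, b) :=
    Nat.rel_of_forall_rel_succ_of_lt _ (f := fun k => (initSeg x k, b))
      (fun k => .single (rel_initSeg_succ x T k b)) hmn
  obtain rfl | ⟨rfl, rfl⟩ : d = c ∨ d = false ∧ c = true := by revert d c; decide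
  · exact chain d
  · exact (chain false).tail (rel_underline T (by simp [initSeg]; omega))

theorem isIdeal_branch (hx : ∀ k, initSeg x k ∈ T) (c : Bool) :
    IsIdeal (Relation.TransGen (TreeRel T)) (branch x c) := by
  refine isIdeal_transGen ⟨(initSeg x 0, false), 0, rfl, Bool.false_le c⟩
    (fun _ _ hpq hq => mem_branch_of_rel x T hx hpq hq) ?_
  rintro ⟨_, d⟩ ⟨m, rfl, hd⟩ ⟨_, e⟩ ⟨n, rfl, he⟩
  exact ⟨(initSeg x (max m n + 1), c), ⟨_, rfl, le_rfl⟩,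
    transGen_initSeg x T (by omega) hd, transGen_initSeg x T (by omega) he⟩

theorem branch_false_ssubset_branch_true : branch x false ⊂ branch x true := by
  refine ⟨fun p ⟨k, hk, _⟩ => ⟨k, hk, Bool.le_true _⟩, fun h => ?_⟩
  obtain ⟨_, -, h⟩ := h (show (initSeg x 0, true) ∈ branch x true from ⟨0, rfl, le_rfl⟩)
  exact absurd h (by simp)

end TreeRel

theorem stmt9_general (T : Set (List ℕ))
    (hpath : ∃ x : ℕ → ℕ, ∀ k, (List.ofFn fun i : Fin k => x i) ∈ T) :
    ¬ T1Space (IdealSpace (Relation.TransGen (TreeRel T))) := by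
  obtain ⟨x, hx⟩ := hpath
  exact IdealSpace.not_t1Space_of_ssubset (I := ⟨_, TreeRel.isIdeal_branch x T hx false⟩)
    (J := ⟨_, TreeRel.isIdeal_branch x T hx true⟩) (TreeRel.branch_false_ssubset_branch_true x)

theorem stmt9 (T : Set (List ℕ)) (hT : ∀ σ ∈ T, ∀ τ, τ <+: σ → τ ∈ T)
    (hpath : ∃ x : ℕ → ℕ, ∀ k, (List.ofFn fun i : Fin k => x i) ∈ T) :
    ¬ T1Space (IdealSpace (Relation.TransGen (TreeRel T))) :=
  stmt9_general T hpath
end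

section
/- Let T ⊆ List ℕ be a tree (a set of finite sequences closed under taking prefixes) and let ≺ be the transitive closure of the relation R on S = List ℕ × Bool generated as follows: for every nonempty σ ∈ List ℕ with immediate predecessor σ⁻ (σ with its last entry removed): (σ⁻, false) R (σ, false); (σ⁻, true) R (σ, true); (σ, false) R (σ, true); and additionally (σ⁻, true) R (σ, false) whenever σ ∉ T. If T is well-founded, i.e. for every x : ℕ → ℕ there is k with [x 0, …, x (k−1)] ∉ T, then the space of ideals I(≺) is homeomorphic to Baire space ℕ → ℕ (with the product topology where ℕ is discrete). -/
open Relation PiNat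

section SeqPrefix

variable {α : Type*}

def seqPrefix (x : ℕ → α) (n : ℕ) : List α := List.ofFn fun i : Fin n => x i

@[simp]
theorem length_seqPrefix (x : ℕ → α) (n : ℕ) : (seqPrefix x n).length = n :=
  List.length_ofFn

@[simp]
theorem getElem_seqPrefix (x : ℕ → α) {n i : ℕ} (h : i < (seqPrefix x n).length) :
    (seqPrefix x n)[i] = x i :=
  List.getElem_ofFn h

theorem seqPrefix_succ (x : ℕ → α) (n : ℕ) : seqPrefix x (n + 1) = seqPrefix x n ++ [x n] := by
  rw [seqPrefix, List.ofFn_succ', List.concat_eq_append]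
  rfl

theorem seqPrefix_prefix_seqPrefix (x : ℕ → α) {m n : ℕ} (h : m ≤ n) :
    seqPrefix x m <+: seqPrefix x n := by
  induction n, h using Nat.le_induction with
  | base => exact List.prefix_rfl
  | succ n _ ih => exact ih.trans (seqPrefix_succ x n ▸ List.prefix_append _ _)

theorem seqPrefix_length_eq_iff {x : ℕ → α} {σ : List α} :
    seqPrefix x σ.length = σ ↔ ∀ i (h : i < σ.length), σ[i] = x i := by
  refine ⟨fun h i hi => (List.getElem_of_eq h.symm hi).trans (by simp), fun h => ?_⟩
  exact List.ext_getElem (by simp) fun i _ hi => by simp [h i hi]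

theorem seqPrefix_length_eq_of_prefix {x : ℕ → α} {σ : List α} {n : ℕ}
    (h : σ <+: seqPrefix x n) : seqPrefix x σ.length = σ :=
  seqPrefix_length_eq_iff.2 fun i hi => by simp [h.getElem hi]

theorem seqPrefix_eq_seqPrefix_iff {x y : ℕ → α} {n : ℕ} :
    seqPrefix y n = seqPrefix x n ↔ y ∈ cylinder x n := by
  simp [seqPrefix, List.ofFn_inj, funext_iff, Fin.forall_iff, cylinder]

theorem exists_seqPrefix_of_chain [Inhabited α] {S : Set (List α)}
    (hchain : ∀ σ ∈ S, ∀ τ ∈ S, σ <+: τ ∨ τ <+: σ) (hlong : ∀ n, ∃ σ ∈ S, n < σ.length) :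
    ∃ x : ℕ → α, ∀ σ ∈ S, seqPrefix x σ.length = σ := by
  choose τ hτS hτ using hlong
  refine ⟨fun n => (τ n)[n]'(hτ n), fun σ hσ => seqPrefix_length_eq_iff.2 fun i hi => ?_⟩
  rcases hchain σ hσ (τ i) (hτS i) with h | h
  · exact h.getElem hi
  · exact (h.getElem (hτ i)).symm

end SeqPrefix

section TreeRel

variable {T : Set (List ℕ)}

def treeRank (p : List ℕ × Bool) : ℕ := 2 * p.1.length + p.2.toNat

theorem TreeRel.treeRank_lt {a b : List ℕ × Bool} (h : TreeRel T a b) :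
    treeRank a < treeRank b := by
  obtain ⟨σ, hσ, h⟩ := h
  have hlen : σ.dropLast.length + 1 = σ.length := by
    rw [List.length_dropLast]; have := List.length_pos_iff.2 hσ; omega
  rcases h with ⟨rfl, rfl⟩ | ⟨rfl, rfl⟩ | ⟨rfl, rfl⟩ | ⟨-, rfl, rfl⟩ <;>
    simp only [treeRank, Bool.toNat_true, Bool.toNat_false] <;> omega

theorem TreeRel.transGen_treeRank_lt {a b : List ℕ × Bool} (h : TransGen (TreeRel T) a b) :
    treeRank a < treeRank b := by
  simpa [transGen_eq_self] using h.lift treeRank fun _ _ => TreeRel.treeRank_lt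

theorem TreeRel.fst_prefix {a b : List ℕ × Bool} (h : TreeRel T a b) : a.1 <+: b.1 := by
  obtain ⟨σ, -, h⟩ := h
  rcases h with ⟨rfl, rfl⟩ | ⟨rfl, rfl⟩ | ⟨rfl, rfl⟩ | ⟨-, rfl, rfl⟩ <;>
    simp [List.dropLast_prefix]

theorem TreeRel.transGen_fst_prefix {a b : List ℕ × Bool} (h : TransGen (TreeRel T) a b) :
    a.1 <+: b.1 := by
  simpa [transGen_eq_self] using h.lift Prod.fst fun _ _ => TreeRel.fst_prefix

theorem treeRel_seqPrefix_succ (x : ℕ → ℕ) (n : ℕ) (b : Bool) :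
    TreeRel T (seqPrefix x n, b) (seqPrefix x (n + 1), b) := by
  refine ⟨seqPrefix x (n + 1), by simp [← List.length_pos_iff], ?_⟩
  rw [seqPrefix_succ, List.dropLast_concat]
  cases b <;> simp

theorem treeRel_seqPrefix_true_false (x : ℕ → ℕ) {n : ℕ} (h : seqPrefix x (n + 1) ∉ T) :
    TreeRel T (seqPrefix x n, true) (seqPrefix x (n + 1), false) := by
  refine ⟨seqPrefix x (n + 1), by simp [← List.length_pos_iff], ?_⟩
  rw [seqPrefix_succ, List.dropLast_concat] at *
  simp [h]

theorem transGen_seqPrefix (x : ℕ → ℕ) {m n : ℕ} (hmn : m < n) {b b' : Bool} (hb : b ≤ b') :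
    TransGen (TreeRel T) (seqPrefix x m, b) (seqPrefix x n, b') := by
  have same : TransGen (TreeRel T) (seqPrefix x m, b) (seqPrefix x n, b) := by
    induction n, hmn using Nat.le_induction with
    | base => exact .single (treeRel_seqPrefix_succ x m b)
    | succ n _ ih => exact ih.tail (treeRel_seqPrefix_succ x n b)
  cases b <;> cases b'
  · exact same
  · have hne : seqPrefix x n ≠ [] := by simp [← List.length_pos_iff]; omega
    exact same.tail ⟨seqPrefix x n, hne, by simp⟩
  · exact absurd hb (by decide)
  · exact same

end TreeRel

theorem IsIdeal.exists_le_apply {S : Type*} {r : S → S → Prop} {I : Set S} (hI : IsIdeal r I)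
    {f : S → ℕ} (hf : ∀ a b, r a b → f a < f b) (n : ℕ) : ∃ a ∈ I, n ≤ f a := by
  induction n with
  | zero => obtain ⟨a, ha⟩ := hI.1; exact ⟨a, ha, Nat.zero_le _⟩
  | succ n ih =>
    obtain ⟨a, ha, hn⟩ := ih
    obtain ⟨c, hc, hac, -⟩ := hI.2.2 a ha a ha
    exact ⟨c, hc, hn.trans_lt (hf a c hac)⟩

def branchSet (x : ℕ → ℕ) : Set (List ℕ × Bool) := {p | seqPrefix x p.1.length = p.1}

theorem isIdeal_branchSet (T : Set (List ℕ)) (x : ℕ → ℕ) :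
    IsIdeal (TransGen (TreeRel T)) (branchSet x) := by
  refine ⟨⟨([], false), rfl⟩, fun a ha b hba => ?_, fun a ha b hb => ?_⟩
  · have hba' : b.1 <+: seqPrefix x a.1.length := by
      rw [ha]; exact TreeRel.transGen_fst_prefix hba
    exact seqPrefix_length_eq_of_prefix hba'
  · set N := max a.1.length b.1.length + 1
    have below : ∀ p ∈ branchSet x, p.1.length < N →
        TransGen (TreeRel T) p (seqPrefix x N, true) := by
      rintro ⟨σ, c⟩ (hσ : seqPrefix x σ.length = σ) hlt
      exact hσ ▸ transGen_seqPrefix x hlt (Bool.le_true c)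
    exact ⟨_, by simp [branchSet], below a ha (by omega), below b hb (by omega)⟩

theorem IsIdeal.exists_eq_branchSet {T : Set (List ℕ)} (hT : ∀ σ ∈ T, ∀ τ, τ <+: σ → τ ∈ T)
    (hwf : ∀ x : ℕ → ℕ, ∃ k, seqPrefix x k ∉ T) {I : Set (List ℕ × Bool)}
    (hI : IsIdeal (TransGen (TreeRel T)) I) : ∃ x, I = branchSet x := by
  have hlong : ∀ n, ∃ a ∈ I, n < a.1.length := fun n => by
    obtain ⟨a, ha, hn⟩ := hI.exists_le_apply (fun _ _ => TreeRel.transGen_treeRank_lt) (2 * n + 2)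
    exact ⟨a, ha, by have := a.2.toNat_le; simp only [treeRank] at hn; omega⟩
  obtain ⟨x, hx⟩ := exists_seqPrefix_of_chain (S := Prod.fst '' I)
    (by
      rintro _ ⟨a, ha, rfl⟩ _ ⟨b, hb, rfl⟩
      obtain ⟨c, -, hac, hbc⟩ := hI.2.2 a ha b hb
      exact List.prefix_or_prefix_of_prefix (TreeRel.transGen_fst_prefix hac)
        (TreeRel.transGen_fst_prefix hbc))
    (fun n => by obtain ⟨a, ha, hn⟩ := hlong n; exact ⟨a.1, ⟨a, ha, rfl⟩, hn⟩)
  have mem_false : ∀ n, (seqPrefix x n, false) ∈ I := fun n => by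
    obtain ⟨⟨σ, b⟩, ha, hlt⟩ := hlong n
    have hσ : seqPrefix x σ.length = σ := hx σ ⟨_, ha, rfl⟩
    exact hI.2.1 _ ha _ (hσ ▸ transGen_seqPrefix x hlt (Bool.false_le b))
  -- Far enough along `x` we leave `T`, where `TreeRel T` lets `true` descend to `false`.
  have mem_true : ∀ n, (seqPrefix x n, true) ∈ I := fun n => by
    obtain ⟨k, hk⟩ := hwf x
    have hout : seqPrefix x (k + n + 2) ∉ T := fun h =>
      hk (hT _ h _ (seqPrefix_prefix_seqPrefix x (by omega)))
    have hmem : (seqPrefix x (k + n + 1), true) ∈ I :=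
      hI.2.1 _ (mem_false _) _ (.single (treeRel_seqPrefix_true_false x hout))
    exact hI.2.1 _ hmem _ (transGen_seqPrefix x (by omega) le_rfl)
  refine ⟨x, Set.Subset.antisymm (fun a ha => hx _ ⟨a, ha, rfl⟩) ?_⟩
  rintro ⟨σ, b⟩ (hσ : seqPrefix x σ.length = σ)
  cases b
  · exact hσ ▸ mem_false σ.length
  · exact hσ ▸ mem_true σ.length

theorem branchSet_injective : Function.Injective branchSet := by
  intro x y h
  funext n
  have hmem : (seqPrefix x (n + 1), false) ∈ branchSet y := h ▸ by simp [branchSet]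
  exact (seqPrefix_eq_seqPrefix_iff.1 (by simpa [branchSet] using hmem) n n.lt_succ_self).symm

def toIdeal (T : Set (List ℕ)) (x : ℕ → ℕ) : IdealSpace (TransGen (TreeRel T)) :=
  ⟨branchSet x, isIdeal_branchSet T x⟩

theorem toIdeal_bijective {T : Set (List ℕ)} (hT : ∀ σ ∈ T, ∀ τ, τ <+: σ → τ ∈ T)
    (hwf : ∀ x : ℕ → ℕ, ∃ k, seqPrefix x k ∉ T) : Function.Bijective (toIdeal T) := by
  refine ⟨fun x y h => branchSet_injective (congrArg Subtype.val h), fun I => ?_⟩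
  obtain ⟨x, hx⟩ := I.2.exists_eq_branchSet hT hwf
  exact ⟨x, Subtype.ext hx.symm⟩

theorem continuous_toIdeal (T : Set (List ℕ)) : Continuous (toIdeal T) := by
  refine continuous_generateFrom_iff.2 ?_
  rintro _ ⟨a, rfl⟩
  show IsOpen {x | seqPrefix x a.1.length = a.1}
  refine isOpen_iff_forall_mem_open.2 fun y hy => ⟨cylinder y a.1.length, ?_, ?_, ?_⟩
  · exact fun z hz => (seqPrefix_eq_seqPrefix_iff.2 hz).trans hy
  · exact isOpen_cylinder _ y _
  · exact self_mem_cylinder y _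

theorem image_toIdeal_cylinder {T : Set (List ℕ)} (h : Function.Bijective (toIdeal T))
    (x : ℕ → ℕ) (n : ℕ) : toIdeal T '' cylinder x n = {I | (seqPrefix x n, false) ∈ I.1} := by
  ext I
  obtain ⟨y, rfl⟩ := h.2 I
  rw [h.1.mem_set_image, ← seqPrefix_eq_seqPrefix_iff]
  show _ ↔ seqPrefix y (seqPrefix x n).length = _
  rw [length_seqPrefix]

theorem isOpenMap_toIdeal {T : Set (List ℕ)} (h : Function.Bijective (toIdeal T)) :
    IsOpenMap (toIdeal T) := by
  refine (isTopologicalBasis_cylinders _).isOpenMap_iff.2 ?_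
  rintro _ ⟨x, n, rfl⟩
  rw [image_toIdeal_cylinder h]
  exact TopologicalSpace.isOpen_generateFrom_of_mem ⟨_, rfl⟩

theorem stmt10 (T : Set (List ℕ)) (hT : ∀ σ ∈ T, ∀ τ, τ <+: σ → τ ∈ T)
    (hwf : ∀ x : ℕ → ℕ, ∃ k, (List.ofFn fun i : Fin k => x i) ∉ T) :
    Nonempty (IdealSpace (Relation.TransGen (TreeRel T)) ≃ₜ (ℕ → ℕ)) := by
  have hbij := toIdeal_bijective hT hwf
  exact ⟨((Equiv.ofBijective _ hbij).toHomeomorphOfContinuousOpen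
    (continuous_toIdeal T) (isOpenMap_toIdeal hbij)).symm⟩
end

section
/- Let T ⊆ List ℕ be a tree (a set of finite sequences closed under taking prefixes) and let ≺ be the transitive closure of the relation R on S = List ℕ × Bool generated as follows: for every nonempty σ ∈ List ℕ with immediate predecessor σ⁻ (σ with its last entry removed): (σ⁻, false) R (σ, false); (σ⁻, true) R (σ, true); (σ, false) R (σ, true); and additionally (σ⁻, true) R (σ, false) whenever σ ∉ T. Then for every ideal I of ≺ there exist x : ℕ → ℕ and b ∈ Bool such that I equals the ≺-downward closure of the set {(x↾k, b) | k ∈ ℕ}, where x↾k = [x 0, …, x (k−1)] and the ≺-downward closure of a set D is D ∪ {a ∈ S | ∃ d ∈ D, a ≺ d}. -/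
/-- The downward closure of a set `D` under a relation `r`. -/
def downClosure {S : Type*} (r : S → S → Prop) (D : Set S) : Set S :=
  D ∪ {a | ∃ d ∈ D, r a d}


/-!
Every step of `TreeRel T` extends the sequence component and raises `2 * length + flag`, so the
sequence components of an ideal `I` are pairwise comparable under `<+:` and of unbounded length:
they all lie on one branch `x`. If `I` has elements `(σ, true)` of arbitrarily large length, then
`b = true`; otherwise all long elements of `I` carry the flag `false` and `b = false`. Either way
the points `(x↾k, b)` lie in `I` and are cofinal in it.
-/

section Ideal

variable {S : Type*} {r : S → S → Prop} {I : Set S}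

theorem IsIdeal.exists_rel_mem (hI : IsIdeal r I) {a : S} (ha : a ∈ I) : ∃ c ∈ I, r a c := by
  obtain ⟨c, hc, hac, -⟩ := hI.2.2 a ha a ha
  exact ⟨c, hc, hac⟩

theorem IsIdeal.exists_lt_apply (hI : IsIdeal r I) {f : S → ℕ} (hf : ∀ a b, r a b → f a < f b)
    (n : ℕ) : ∃ a ∈ I, n < f a := by
  induction n with
  | zero =>
    obtain ⟨a, ha⟩ := hI.1
    obtain ⟨c, hc, hac⟩ := hI.exists_rel_mem ha
    exact ⟨c, hc, Nat.zero_lt_of_lt (hf a c hac)⟩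
  | succ n ih =>
    obtain ⟨a, ha, hna⟩ := ih
    obtain ⟨c, hc, hac⟩ := hI.exists_rel_mem ha
    exact ⟨c, hc, (Nat.succ_le_of_lt hna).trans_lt (hf a c hac)⟩

theorem IsIdeal.eq_downClosure (hI : IsIdeal r I) {D : Set S} (hDI : D ⊆ I)
    (hcofinal : ∀ a ∈ I, ∃ d ∈ D, r a d) : I = downClosure r D := by
  refine Set.Subset.antisymm (fun a ha => Or.inr (hcofinal a ha)) ?_
  rintro a (ha | ⟨d, hd, had⟩)
  · exact hDI ha
  · exact hI.2.1 d (hDI hd) a had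

end Ideal

theorem List.exists_eq_ofFn_of_isChain {α : Type*} {L : Set (List α)}
    (hchain : ∀ l ∈ L, ∀ l' ∈ L, l <+: l' ∨ l' <+: l) (hlong : ∀ n, ∃ l ∈ L, n < l.length) :
    ∃ x : ℕ → α, ∀ l ∈ L, l = List.ofFn fun i : Fin l.length => x i := by
  choose f hfL hlen using hlong
  refine ⟨fun n => (f n)[n]'(hlen n), fun l hl => List.ext_getElem (by simp) fun i hi _ => ?_⟩
  rw [List.getElem_ofFn]
  rcases hchain l hl (f i) (hfL i) with h | h
  · exact h.getElem hi
  · exact (h.getElem (hlen i)).symm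

theorem List.ofFn_prefix_ofFn {α : Type*} (x : ℕ → α) {k m : ℕ} (hkm : k ≤ m) :
    (List.ofFn fun i : Fin k => x i) <+: List.ofFn fun i : Fin m => x i := by
  rw [List.prefix_iff_eq_take]
  exact List.ext_getElem (by simp [hkm]) fun i _ _ => by simp

namespace TreeRel

variable {T : Set (List ℕ)}

def rank (a : List ℕ × Bool) : ℕ := 2 * a.1.length + a.2.toNat

theorem prefix_fst {a b : List ℕ × Bool} (h : TreeRel T a b) : a.1 <+: b.1 := by
  obtain ⟨σ, -, h⟩ := h
  rcases h with ⟨rfl, rfl⟩ | ⟨rfl, rfl⟩ | ⟨rfl, rfl⟩ | ⟨-, rfl, rfl⟩ <;>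
    simp [List.dropLast_prefix]

theorem rank_lt {a b : List ℕ × Bool} (h : TreeRel T a b) : rank a < rank b := by
  obtain ⟨σ, hσ, h⟩ := h
  have hlen : 0 < σ.length := List.length_pos_iff.2 hσ
  rcases h with ⟨rfl, rfl⟩ | ⟨rfl, rfl⟩ | ⟨rfl, rfl⟩ | ⟨-, rfl, rfl⟩ <;>
    simp [rank, List.length_dropLast] <;> omega

theorem transGen_prefix_fst {a b : List ℕ × Bool} (h : Relation.TransGen (TreeRel T) a b) :
    a.1 <+: b.1 := by
  have := Relation.TransGen.lift Prod.fst (fun _ _ => prefix_fst) _ _ h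
  rwa [Relation.transGen_eq_self] at this

theorem transGen_rank_lt {a b : List ℕ × Bool} (h : Relation.TransGen (TreeRel T) a b) :
    rank a < rank b := by
  have := Relation.TransGen.lift rank (fun _ _ => rank_lt) _ _ h
  rwa [Relation.transGen_eq_self] at this

theorem transGen_of_prefix (c : Bool) {σ τ : List ℕ} (hστ : σ <+: τ)
    (hlen : σ.length < τ.length) : Relation.TransGen (TreeRel T) (σ, c) (τ, c) := by
  induction τ using List.reverseRecOn with
  | nil => simp at hlen
  | append_singleton l a ih =>
    have hstep : TreeRel T (l, c) (l ++ [a], c) := ⟨l ++ [a], by simp, by cases c <;> simp⟩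
    rcases List.prefix_concat_iff.1 hστ with rfl | hσl
    · simp at hlen
    rcases hσl.length_le.eq_or_lt with heq | hlt
    · rw [hσl.eq_of_length heq]
      exact .single hstep
    · exact (ih hσl hlt).tail hstep

theorem transGen_of_prefix_of_le {σ τ : List ℕ} {b c : Bool} (hστ : σ <+: τ)
    (hlen : σ.length < τ.length) (hbc : b ≤ c) : Relation.TransGen (TreeRel T) (σ, b) (τ, c) := by
  obtain rfl | ⟨rfl, rfl⟩ : b = c ∨ b = false ∧ c = true := by
    revert hbc; cases b <;> cases c <;> decide
  · exact transGen_of_prefix b hστ hlen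
  · have hτ : τ ≠ [] := List.ne_nil_of_length_pos (Nat.zero_lt_of_lt hlen)
    exact (transGen_of_prefix false hστ hlen).tail ⟨τ, hτ, Or.inr (Or.inr (Or.inl ⟨rfl, rfl⟩))⟩

theorem transGen_ofFn (x : ℕ → ℕ) {k m : ℕ} {b c : Bool} (hkm : k < m) (hbc : b ≤ c) :
    Relation.TransGen (TreeRel T) (List.ofFn fun i : Fin k => x i, b)
      (List.ofFn fun i : Fin m => x i, c) :=
  transGen_of_prefix_of_le (List.ofFn_prefix_ofFn x hkm.le) (by simpa using hkm) hbc

variable {I : Set (List ℕ × Bool)}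

theorem exists_lt_length_of_isIdeal (hI : IsIdeal (Relation.TransGen (TreeRel T)) I) (n : ℕ) :
    ∃ a ∈ I, n < a.1.length := by
  obtain ⟨a, ha, hn⟩ := hI.exists_lt_apply (fun _ _ => transGen_rank_lt) (2 * n + 1)
  refine ⟨a, ha, ?_⟩
  have := a.2.toNat_le
  simp only [rank] at hn
  omega

theorem exists_eq_ofFn_of_isIdeal (hI : IsIdeal (Relation.TransGen (TreeRel T)) I) :
    ∃ x : ℕ → ℕ, ∀ a ∈ I, a = (List.ofFn fun i : Fin a.1.length => x i, a.2) := by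
  have hchain : ∀ l ∈ Prod.fst '' I, ∀ l' ∈ Prod.fst '' I, l <+: l' ∨ l' <+: l := by
    rintro _ ⟨a, ha, rfl⟩ _ ⟨b, hb, rfl⟩
    obtain ⟨c, -, hac, hbc⟩ := hI.2.2 a ha b hb
    exact List.prefix_or_prefix_of_prefix (transGen_prefix_fst hac) (transGen_prefix_fst hbc)
  have hlong : ∀ n, ∃ l ∈ Prod.fst '' I, n < l.length := fun n =>
    let ⟨a, ha, hn⟩ := exists_lt_length_of_isIdeal hI n
    ⟨a.1, Set.mem_image_of_mem _ ha, hn⟩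
  obtain ⟨x, hx⟩ := List.exists_eq_ofFn_of_isChain hchain hlong
  exact ⟨x, fun a ha => Prod.ext (hx a.1 (Set.mem_image_of_mem _ ha)) rfl⟩

end TreeRel

theorem stmt11_general (T : Set (List ℕ))
    (I : Set (List ℕ × Bool)) (hI : IsIdeal (Relation.TransGen (TreeRel T)) I) :
    ∃ (x : ℕ → ℕ) (b : Bool),
      I = downClosure (Relation.TransGen (TreeRel T))
        {p : List ℕ × Bool | ∃ k : ℕ, p = (List.ofFn fun i : Fin k => x i, b)} := by
  obtain ⟨x, hx⟩ := TreeRel.exists_eq_ofFn_of_isIdeal hI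
  have hmem : ∀ a ∈ I, ∀ k b, k < a.1.length → b ≤ a.2 →
      ((List.ofFn fun i : Fin k => x i), b) ∈ I := by
    intro a ha k b hk hb
    rw [hx a ha] at ha
    exact hI.2.1 _ ha _ (TreeRel.transGen_ofFn x (by simpa using hk) hb)
  by_cases htrue : ∀ n, ∃ a ∈ I, n < a.1.length ∧ a.2 = true
  · refine ⟨x, true, hI.eq_downClosure ?_ fun a ha => ?_⟩
    · rintro _ ⟨k, rfl⟩
      obtain ⟨a, ha, hk, ha2⟩ := htrue k
      exact hmem a ha k true hk ha2.ge
    · obtain ⟨c, hc, hac⟩ := hI.exists_rel_mem ha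
      refine ⟨_, ⟨c.1.length + 1, rfl⟩, hac.trans ?_⟩
      rw [hx c hc]
      exact TreeRel.transGen_ofFn x (by simp) (Bool.le_true _)
  · push Not at htrue
    obtain ⟨N, hN⟩ := htrue
    refine ⟨x, false, hI.eq_downClosure ?_ fun a ha => ?_⟩
    · rintro _ ⟨k, rfl⟩
      obtain ⟨a, ha, hk⟩ := TreeRel.exists_lt_length_of_isIdeal hI k
      exact hmem a ha k false hk (Bool.false_le _)
    · obtain ⟨t, ht, hNt⟩ := TreeRel.exists_lt_length_of_isIdeal hI N
      obtain ⟨c, hc, hac, htc⟩ := hI.2.2 a ha t ht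
      have hNc : N < c.1.length := hNt.trans_le (TreeRel.transGen_prefix_fst htc).length_le
      refine ⟨c, ⟨c.1.length, ?_⟩, hac⟩
      rw [← Bool.eq_false_iff.2 (hN c hc hNc)]
      exact hx c hc

theorem stmt11 (T : Set (List ℕ)) (hT : ∀ σ ∈ T, ∀ τ, τ <+: σ → τ ∈ T)
    (I : Set (List ℕ × Bool)) (hI : IsIdeal (Relation.TransGen (TreeRel T)) I) :
    ∃ (x : ℕ → ℕ) (b : Bool),
      I = downClosure (Relation.TransGen (TreeRel T))
        {p : List ℕ × Bool | ∃ k : ℕ, p = (List.ofFn fun i : Fin k => x i, b)} :=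
  stmt11_general T I hI
end

section
/- Let T ⊆ List ℕ be a tree (a set of finite sequences closed under taking prefixes) containing the empty sequence, and let ≺ be the transitive closure of the relation R on S = List ℕ ⊕ (List ℕ × Bool) generated as follows (inl σ codes the symbol σ̲, inr (σ, false) codes [σ,∞], inr (σ, true) codes [σ,∞*]): for every σ ∈ List ℕ and b ∈ Bool: inr (σ, b) R inl σ and inl σ R inl σ; for every nonempty σ with immediate predecessor σ⁻ and every b: inr (σ⁻, b) R inr (σ, b); and additionally, whenever σ is nonempty and σ ∉ T: inr (σ⁻, true) R inr (σ, false) and inr (σ, false) R inr (σ, true). If T has an infinite path, i.e. there exists x : ℕ → ℕ with [x 0, …, x (k−1)] ∈ T for every k, then the space of ideals I(≺) is a T1 space but is not Hausdorff. -/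
/-- The generating relation of the telophase-type space: `Sum.inl σ` codes the
symbol `σ̲`, `Sum.inr (σ, false)` codes `[σ,∞]` and `Sum.inr (σ, true)` codes `[σ,∞*]`. -/
def TeloRel (T : Set (List ℕ)) :
    (List ℕ ⊕ (List ℕ × Bool)) → (List ℕ ⊕ (List ℕ × Bool)) → Prop := fun a b =>
  (∃ (σ : List ℕ) (c : Bool), a = Sum.inr (σ, c) ∧ b = Sum.inl σ) ∨
  (∃ σ : List ℕ, a = Sum.inl σ ∧ b = Sum.inl σ) ∨
  (∃ (σ : List ℕ) (c : Bool), σ ≠ [] ∧ a = Sum.inr (σ.dropLast, c) ∧ b = Sum.inr (σ, c)) ∨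
  (∃ σ : List ℕ, σ ≠ [] ∧ σ ∉ T ∧
    ((a = Sum.inr (σ.dropLast, true) ∧ b = Sum.inr (σ, false)) ∨
     (a = Sum.inr (σ, false) ∧ b = Sum.inr (σ, true))))

/-!
Distinct ideals of `≺` are incomparable under inclusion, which makes the ideal space T1: a point
specializes to exactly the ideals it contains. An ideal containing a symbol `σ̲` is the principal
ideal below it. Any other ideal consists of interval symbols whose sequences form an infinite chain;
if the chain stays inside `T`, then `≺` never changes the flag there, and if it leaves `T`, then both
flags at every earlier sequence lie below the chain. In either case a larger ideal has nothing to add.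

Along an infinite path of `T` the two flags give two distinct ideals, yet for any `a` in the first and
`b` in the second, the principal ideal of a long enough symbol `σ̲` on the path lies in both basic
open sets `[a]` and `[b]`, so the two ideals cannot be separated.
-/

open Relation
open Sum (inl inr)

theorem mem_of_transGen {α : Type*} {r : α → α → Prop} {M : Set α}
    (hM : ∀ a b, r a b → b ∈ M → a ∈ M) {a b : α} (h : TransGen r a b) (hb : b ∈ M) : a ∈ M := by
  induction h with
  | single hab => exact hM _ _ hab hb
  | tail _ hbc ih => exact ih (hM _ _ hbc hb)

section IsIdeal

variable {S : Type*} {r : S → S → Prop}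

theorem isIdeal_setOf_rel [IsTrans S r] {c : S} (hc : r c c) : IsIdeal r {a | r a c} :=
  ⟨⟨c, hc⟩, fun _ ha _ hba => trans_of r hba ha, fun _ ha _ hb => ⟨c, hc, ha, hb⟩⟩

theorem IsIdeal.eq_setOf_rel_of_maximal {I : Set S} (hI : IsIdeal r I) {c : S} (hc : c ∈ I)
    (hmax : ∀ b, r c b → b = c) : I = {a | r a c} := by
  ext a
  refine ⟨fun ha => ?_, fun ha => hI.2.1 c hc a ha⟩
  obtain ⟨d, -, had, hcd⟩ := hI.2.2 a ha c hc
  exact hmax d hcd ▸ had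

end IsIdeal

namespace IdealSpace

variable {S : Type*} {r : S → S → Prop}

def basicOpen (a : S) : Set (IdealSpace r) := {I | a ∈ I.1}

theorem isOpen_basicOpen (a : S) : IsOpen (basicOpen (r := r) a) :=
  TopologicalSpace.isOpen_generateFrom_of_mem ⟨a, rfl⟩

theorem isTopologicalBasis_basicOpen :
    TopologicalSpace.IsTopologicalBasis (Set.range (basicOpen (r := r))) where
  exists_subset_inter := by
    rintro _ ⟨a, rfl⟩ _ ⟨b, rfl⟩ I ⟨ha, hb⟩
    obtain ⟨c, hc, hac, hbc⟩ := I.2.2.2 a ha b hb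
    exact ⟨basicOpen c, ⟨c, rfl⟩, hc, fun J hJ => ⟨J.2.2.1 c hJ a hac, J.2.2.1 c hJ b hbc⟩⟩
  sUnion_eq := by
    refine Set.eq_univ_of_forall fun I => ?_
    obtain ⟨a, ha⟩ := I.2.1
    exact ⟨basicOpen a, ⟨a, rfl⟩, ha⟩
  eq_generateFrom := by
    show TopologicalSpace.generateFrom _ = _
    congr 1
    ext U
    exact exists_congr fun a => eq_comm

theorem t1Space_of_subset_imp_eq (h : ∀ I J : IdealSpace r, I.1 ⊆ J.1 → I = J) :
    T1Space (IdealSpace r) :=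
  t1Space_iff_specializes_imp_eq.2 fun I J hIJ =>
    (h J I fun a ha => specializes_iff_forall_open.1 hIJ _ (isOpen_basicOpen a) ha).symm

theorem not_t2Space_of_forall_exists_mem {I J : IdealSpace r} (hIJ : I ≠ J)
    (h : ∀ a ∈ I.1, ∀ b ∈ J.1, ∃ K : IdealSpace r, a ∈ K.1 ∧ b ∈ K.1) :
    ¬T2Space (IdealSpace r) := by
  intro _
  have hB := isTopologicalBasis_basicOpen (r := r)
  obtain ⟨_, ⟨⟨a, rfl⟩, ha⟩, _, ⟨⟨b, rfl⟩, hb⟩, hdisj⟩ :=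
    (hB.nhds_hasBasis.disjoint_iff hB.nhds_hasBasis).1 (disjoint_nhds_nhds.2 hIJ)
  obtain ⟨K, haK, hbK⟩ := h a ha b hb
  exact hdisj.ne_of_mem haK hbK rfl

end IdealSpace

namespace TeloRel

variable {T : Set (List ℕ)} {a b : List ℕ ⊕ (List ℕ × Bool)}

def seq : List ℕ ⊕ (List ℕ × Bool) → List ℕ := Sum.elim id Prod.fst

-- `[σ,∞] ≺ [σ,∞*] ≺ [σ ++ [n],∞]` and `[σ,∞*] ≺ σ̲` all raise the rank.
def rank : List ℕ ⊕ (List ℕ × Bool) → ℕ :=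
  Sum.elim (fun σ => 2 * σ.length + 2) fun p => 2 * p.1.length + p.2.toNat

theorem seq_prefix (h : TeloRel T a b) : seq a <+: seq b := by
  rcases h with ⟨σ, c, rfl, rfl⟩ | ⟨σ, rfl, rfl⟩ | ⟨σ, c, -, rfl, rfl⟩ |
      ⟨σ, -, -, ⟨rfl, rfl⟩ | ⟨rfl, rfl⟩⟩ <;>
    simp [seq, List.dropLast_prefix]

theorem seq_prefix_of_transGen (h : TransGen (TeloRel T) a b) : seq a <+: seq b := by
  induction h with
  | single hab => exact seq_prefix hab
  | tail _ hbc ih => exact ih.trans (seq_prefix hbc)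

theorem rel_inl_iff {σ : List ℕ} : TeloRel T (inl σ) b ↔ b = inl σ := by
  refine ⟨fun h => ?_, by rintro rfl; exact Or.inr (Or.inl ⟨σ, rfl, rfl⟩)⟩
  rcases h with ⟨_, _, h, -⟩ | ⟨_, h, rfl⟩ | ⟨_, _, -, h, -⟩ | ⟨_, -, -, ⟨h, -⟩ | ⟨h, -⟩⟩ <;>
    cases h
  rfl

theorem transGen_inl_iff {σ : List ℕ} : TransGen (TeloRel T) (inl σ) b ↔ b = inl σ := by
  refine ⟨fun h => ?_, fun h => .single (rel_inl_iff.2 h)⟩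
  induction h with
  | single hab => exact rel_inl_iff.1 hab
  | tail _ hbc ih => exact rel_inl_iff.1 (ih ▸ hbc)

theorem transGen_inl_self (σ : List ℕ) : TransGen (TeloRel T) (inl σ) (inl σ) :=
  transGen_inl_iff.2 rfl

theorem rank_lt_of_rel_inr {p : List ℕ × Bool} (h : TeloRel T (inr p) b) :
    rank (inr p) < rank b := by
  rcases h with ⟨σ, c, h, rfl⟩ | ⟨_, h, -⟩ | ⟨σ, c, hσ, h, rfl⟩ |
      ⟨σ, hσ, -, ⟨h, rfl⟩ | ⟨h, rfl⟩⟩ <;>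
    cases h
  · simpa [rank] using Bool.toNat_le c
  · have := List.length_pos_iff.2 hσ
    simp only [rank, Sum.elim_inr, List.length_dropLast]
    omega
  · have := List.length_pos_iff.2 hσ
    simp only [rank, Sum.elim_inr, List.length_dropLast, Bool.toNat_true, Bool.toNat_false]
    omega
  · simp [rank]

theorem rank_le (h : TeloRel T a b) : rank a ≤ rank b := by
  rcases a with σ | p
  · rw [rel_inl_iff.1 h]
  · exact (rank_lt_of_rel_inr h).le

theorem rank_lt_of_transGen_inr {p : List ℕ × Bool} (h : TransGen (TeloRel T) (inr p) b) :
    rank (inr p) < rank b := by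
  induction h with
  | single hab => exact rank_lt_of_rel_inr hab
  | tail _ hbc ih => exact ih.trans_le (rank_le hbc)

theorem eq_inr_dropLast_of_rel {β : List ℕ} {e : Bool} (h : TeloRel T a (inr (β, e)))
    (hβ : β ∈ T) : β ≠ [] ∧ a = inr (β.dropLast, e) := by
  rcases h with ⟨_, _, -, h⟩ | ⟨_, -, h⟩ | ⟨σ, c, hσ, rfl, h⟩ | ⟨σ, -, hσT, ⟨-, h⟩ | ⟨-, h⟩⟩ <;>
    cases h
  · exact ⟨hσ, rfl⟩
  all_goals exact absurd hβ hσT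

theorem flag_eq_of_transGen (hT : ∀ σ ∈ T, ∀ τ, τ <+: σ → τ ∈ T) {α β : List ℕ} {c e : Bool}
    (h : TransGen (TeloRel T) (inr (α, c)) (inr (β, e))) (hβ : β ∈ T) : c = e := by
  have hclosed : ∀ s t, TeloRel T s t → t ∈ {s | ∃ γ ∈ T, s = inr (γ, e)} →
      s ∈ {s | ∃ γ ∈ T, s = inr (γ, e)} := by
    rintro s _ hs ⟨γ, hγ, rfl⟩
    exact ⟨γ.dropLast, hT γ hγ _ (List.dropLast_prefix γ), (eq_inr_dropLast_of_rel hs hγ).2⟩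
  obtain ⟨γ, -, hγ⟩ := mem_of_transGen hclosed h ⟨β, hβ, rfl⟩
  cases hγ
  rfl

theorem rel_inr_append_singleton (ρ : List ℕ) (c : Bool) (n : ℕ) :
    TeloRel T (inr (ρ, c)) (inr (ρ ++ [n], c)) :=
  Or.inr <| Or.inr <| Or.inl ⟨ρ ++ [n], c, by simp, by rw [List.dropLast_concat], rfl⟩

theorem transGen_inr_of_prefix (c : Bool) {ρ τ : List ℕ} (hp : ρ <+: τ) (hne : ρ ≠ τ) :
    TransGen (TeloRel T) (inr (ρ, c)) (inr (τ, c)) := by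
  induction τ using List.reverseRecOn with
  | nil => exact absurd (List.prefix_nil.1 hp) hne
  | append_singleton τ n ih =>
    have hρτ : ρ <+: τ := (List.prefix_concat_iff.1 hp).resolve_left hne
    rcases eq_or_ne ρ τ with rfl | hne'
    · exact .single (rel_inr_append_singleton ρ c n)
    · exact .tail (ih hρτ hne') (rel_inr_append_singleton τ c n)

theorem transGen_inr_of_not_mem (d c : Bool) {ρ τ : List ℕ} (hp : ρ <+: τ) (hne : ρ ≠ τ)
    (hτ : τ ∉ T) : TransGen (TeloRel T) (inr (ρ, d)) (inr (τ, c)) := by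
  have hτ₀ : τ ≠ [] := by
    rintro rfl
    exact hne (List.prefix_nil.1 hp)
  have cross₁ : TeloRel T (inr (τ.dropLast, true)) (inr (τ, false)) :=
    Or.inr <| Or.inr <| Or.inr ⟨τ, hτ₀, hτ, .inl ⟨rfl, rfl⟩⟩
  have cross₂ : TeloRel T (inr (τ, false)) (inr (τ, true)) :=
    Or.inr <| Or.inr <| Or.inr ⟨τ, hτ₀, hτ, .inr ⟨rfl, rfl⟩⟩
  have to_false : TransGen (TeloRel T) (inr (ρ, d)) (inr (τ, false)) := by
    cases d
    · exact transGen_inr_of_prefix false hp hne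
    · have hpτ : ρ <+: τ.dropLast := by
        rw [← List.dropLast_append_getLast hτ₀] at hp hne
        exact (List.prefix_concat_iff.1 hp).resolve_left hne
      rcases eq_or_ne ρ τ.dropLast with rfl | hne'
      · exact .single cross₁
      · exact .tail (transGen_inr_of_prefix true hpτ hne') cross₁
  cases c
  · exact to_false
  · exact .tail to_false cross₂

theorem transGen_inr_inl (c : Bool) {ρ σ : List ℕ} (hp : ρ <+: σ) :
    TransGen (TeloRel T) (inr (ρ, c)) (inl σ) := by
  have hstep : TeloRel T (inr (σ, c)) (inl σ) := Or.inl ⟨σ, c, rfl, rfl⟩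
  rcases eq_or_ne ρ σ with rfl | hne
  · exact .single hstep
  · exact .tail (transGen_inr_of_prefix c hp hne) hstep

section Ideals

variable {I J : Set (List ℕ ⊕ (List ℕ × Bool))}

theorem eq_setOf_of_inl_mem (hI : IsIdeal (TransGen (TeloRel T)) I) {σ : List ℕ}
    (hσ : inl σ ∈ I) : I = {a | TransGen (TeloRel T) a (inl σ)} :=
  hI.eq_setOf_rel_of_maximal hσ fun _ hb => transGen_inl_iff.1 hb

theorem exists_rank_ge (hI : IsIdeal (TransGen (TeloRel T)) I) (hno : ∀ σ, inl σ ∉ I) (n : ℕ) :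
    ∃ a ∈ I, n ≤ rank a := by
  induction n with
  | zero =>
    obtain ⟨a, ha⟩ := hI.1
    exact ⟨a, ha, Nat.zero_le _⟩
  | succ n ih =>
    obtain ⟨a, ha, hn⟩ := ih
    obtain ⟨b, hb, hab, -⟩ := hI.2.2 a ha a ha
    rcases a with σ | p
    · exact absurd ha (hno σ)
    · exact ⟨b, hb, hn.trans_lt (rank_lt_of_transGen_inr hab)⟩

theorem exists_inr_length_gt (hI : IsIdeal (TransGen (TeloRel T)) I) (hno : ∀ σ, inl σ ∉ I)
    (n : ℕ) : ∃ τ c, inr (τ, c) ∈ I ∧ n < τ.length := by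
  obtain ⟨a, ha, hn⟩ := exists_rank_ge hI hno (2 * n + 2)
  rcases a with σ | ⟨τ, c⟩
  · exact absurd ha (hno σ)
  · refine ⟨τ, c, ha, ?_⟩
    have := Bool.toNat_le c
    simp only [rank, Sum.elim_inr] at hn
    omega

theorem seq_prefix_of_length_le (hI : IsIdeal (TransGen (TeloRel T)) I) (ha : a ∈ I) (hb : b ∈ I)
    (hlen : (seq a).length ≤ (seq b).length) : seq a <+: seq b := by
  obtain ⟨c, -, hac, hbc⟩ := hI.2.2 a ha b hb
  rcases List.prefix_or_prefix_of_prefix (seq_prefix_of_transGen hac) (seq_prefix_of_transGen hbc)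
    with h | h
  · exact h
  · exact h.eq_of_length_le hlen ▸ List.prefix_refl _

theorem inl_not_mem_of_subset (hI : IsIdeal (TransGen (TeloRel T)) I)
    (hJ : IsIdeal (TransGen (TeloRel T)) J) (hIJ : I ⊆ J) (hno : ∀ σ, inl σ ∉ I) (σ : List ℕ) :
    inl σ ∉ J := by
  intro hσ
  obtain ⟨τ, c, hτ, hlt⟩ := exists_inr_length_gt hI hno σ.length
  have hτσ : TransGen (TeloRel T) (inr (τ, c)) (inl σ) := (eq_setOf_of_inl_mem hJ hσ).le (hIJ hτ)
  exact absurd (seq_prefix_of_transGen hτσ).length_le (by simpa [seq] using hlt)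

theorem inr_mem_of_subset (hT : ∀ σ ∈ T, ∀ τ, τ <+: σ → τ ∈ T)
    (hI : IsIdeal (TransGen (TeloRel T)) I) (hJ : IsIdeal (TransGen (TeloRel T)) J) (hIJ : I ⊆ J)
    (hno : ∀ σ, inl σ ∉ I) {ρ : List ℕ} {d : Bool} (hb : inr (ρ, d) ∈ J) : inr (ρ, d) ∈ I := by
  obtain ⟨τ, c, ha, hρτ⟩ := exists_inr_length_gt hI hno ρ.length
  obtain ⟨u, hu, hau, hbu⟩ := hJ.2.2 _ (hIJ ha) _ hb
  rcases u with σ | ⟨π, e⟩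
  · exact absurd hu (inl_not_mem_of_subset hI hJ hIJ hno σ)
  by_cases hπ : π ∈ T
  · have hcd : c = d := (flag_eq_of_transGen hT hau hπ).trans (flag_eq_of_transGen hT hbu hπ).symm
    have hp : ρ <+: τ := seq_prefix_of_length_le hJ hb (hIJ ha) hρτ.le
    subst hcd
    exact hI.2.1 _ ha _ (transGen_inr_of_prefix c hp (ne_of_apply_ne List.length hρτ.ne))
  · obtain ⟨τ', c', ha', hπτ'⟩ := exists_inr_length_gt hI hno π.length
    have hρπ : ρ <+: π := seq_prefix_of_transGen hbu
    have hp : π <+: τ' := seq_prefix_of_length_le hJ hu (hIJ ha') hπτ'.le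
    have hρτ' : ρ.length < τ'.length := hρπ.length_le.trans_lt hπτ'
    exact hI.2.1 _ ha' _ <| transGen_inr_of_not_mem d c' (hρπ.trans hp)
      (ne_of_apply_ne List.length hρτ'.ne) fun h => hπ (hT τ' h π hp)

theorem eq_of_subset (hT : ∀ σ ∈ T, ∀ τ, τ <+: σ → τ ∈ T) (hI : IsIdeal (TransGen (TeloRel T)) I)
    (hJ : IsIdeal (TransGen (TeloRel T)) J) (hIJ : I ⊆ J) : I = J := by
  by_cases h : ∃ σ, inl σ ∈ I
  · obtain ⟨σ, hσ⟩ := h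
    rw [eq_setOf_of_inl_mem hI hσ, eq_setOf_of_inl_mem hJ (hIJ hσ)]
  simp only [not_exists] at h
  refine hIJ.antisymm fun b hb => ?_
  rcases b with σ | ⟨ρ, d⟩
  · exact absurd hb (inl_not_mem_of_subset hI hJ hIJ h σ)
  · exact inr_mem_of_subset hT hI hJ hIJ h hb

end Ideals

def branch (x : ℕ → ℕ) (k : ℕ) : List ℕ := List.ofFn fun i : Fin k => x i

variable {x : ℕ → ℕ}

theorem branch_succ (k : ℕ) : branch x (k + 1) = branch x k ++ [x k] := by
  rw [branch, List.ofFn_succ_last]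
  simp [branch]

theorem length_branch (k : ℕ) : (branch x k).length = k := List.length_ofFn

theorem branch_prefix_branch {k m : ℕ} (h : k ≤ m) : branch x k <+: branch x m := by
  induction m, h using Nat.le_induction with
  | base => exact List.prefix_refl _
  | succ m _ ih => exact ih.trans (branch_succ m ▸ List.prefix_append _ _)

def branchIdeal (x : ℕ → ℕ) (c : Bool) : Set (List ℕ ⊕ (List ℕ × Bool)) :=
  Set.range fun k => inr (branch x k, c)

theorem isIdeal_branchIdeal (hx : ∀ k, branch x k ∈ T) (c : Bool) :
    IsIdeal (TransGen (TeloRel T)) (branchIdeal x c) := by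
  refine ⟨⟨_, 0, rfl⟩, fun a ha b hba => mem_of_transGen ?_ hba ha, ?_⟩
  · rintro s _ hs ⟨k, rfl⟩
    obtain ⟨hk, rfl⟩ := eq_inr_dropLast_of_rel hs (hx k)
    cases k with
    | zero => exact absurd rfl hk
    | succ k => exact ⟨k, by rw [branch_succ, List.dropLast_concat]⟩
  · rintro _ ⟨k, rfl⟩ _ ⟨m, rfl⟩
    have below (n : ℕ) (hn : n < k + m + 1) :
        TransGen (TeloRel T) (inr (branch x n, c)) (inr (branch x (k + m + 1), c)) :=
      transGen_inr_of_prefix c (branch_prefix_branch hn.le)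
        (ne_of_apply_ne List.length (by simp only [length_branch]; omega))
    exact ⟨_, Set.mem_range_self (k + m + 1), below k (by omega), below m (by omega)⟩

end TeloRel

theorem stmt12_general (T : Set (List ℕ))
    (hT : ∀ σ ∈ T, ∀ τ, τ <+: σ → τ ∈ T)
    (hpath : ∃ x : ℕ → ℕ, ∀ k, (List.ofFn fun i : Fin k => x i) ∈ T) :
    T1Space (IdealSpace (Relation.TransGen (TeloRel T))) ∧
      ¬ T2Space (IdealSpace (Relation.TransGen (TeloRel T))) := by
  obtain ⟨x, hx⟩ := hpath
  refine ⟨IdealSpace.t1Space_of_subset_imp_eq fun I J hIJ =>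
    Subtype.ext (TeloRel.eq_of_subset hT I.2 J.2 hIJ), ?_⟩
  let I (c : Bool) : IdealSpace (TransGen (TeloRel T)) :=
    ⟨TeloRel.branchIdeal x c, TeloRel.isIdeal_branchIdeal hx c⟩
  refine IdealSpace.not_t2Space_of_forall_exists_mem (I := I false) (J := I true) ?_ ?_
  · intro h
    obtain ⟨k, hk⟩ : inr ([], false) ∈ (I true).1 := h ▸ ⟨0, rfl⟩
    simp at hk
  · rintro _ ⟨k, rfl⟩ _ ⟨m, rfl⟩
    refine ⟨⟨_, isIdeal_setOf_rel (TeloRel.transGen_inl_self (TeloRel.branch x (max k m)))⟩,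
      ?_, ?_⟩ <;>
    exact TeloRel.transGen_inr_inl _ (TeloRel.branch_prefix_branch (by omega))

theorem stmt12 (T : Set (List ℕ)) (hnil : ([] : List ℕ) ∈ T)
    (hT : ∀ σ ∈ T, ∀ τ, τ <+: σ → τ ∈ T)
    (hpath : ∃ x : ℕ → ℕ, ∀ k, (List.ofFn fun i : Fin k => x i) ∈ T) :
    T1Space (IdealSpace (Relation.TransGen (TeloRel T))) ∧
      ¬ T2Space (IdealSpace (Relation.TransGen (TeloRel T))) :=
  stmt12_general T hT hpath
end
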